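/- arXiv:1108.5629 — 8 statements merged into one kernel-verified Lean document; each statement's English description precedes it below -/
import Mathlib

section
/- If the series ∑ₙ φₙ converges unconditionally in a Hilbert space H, then ∑ₙ ‖φₙ‖² < ∞. -/
open scoped BigOperators ComplexConjugate
open Filter Finset

variable {H : Type*} [NormedAddCommGroup H] [InnerProductSpace ℂ H] [CompleteSpace H]

local notation "⟪" x ", " y "⟫" => @inner ℂ _ _ x y

/-- A series `∑ φ n` converges unconditionally if every rearrangement converges. -/
def UncondConv {H : Type*} [NormedAddCommGroup H] (φ : ℕ → H) : Prop :=
  ∀ σ : Equiv.Perm ℕ, ∃ L : H,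
    Tendsto (fun N => ∑ n ∈ Finset.range N, φ (σ n)) atTop (nhds L)

/-- `ξ` is a Bessel sequence: `∑ n, |⟪h, ξ n⟫|² ≤ B ‖h‖²` for all `h`. -/
def Bessel {H : Type*} [NormedAddCommGroup H] [InnerProductSpace ℂ H] (ξ : ℕ → H) : Prop :=
  ∃ B : ℝ, ∀ h : H, ∀ F : Finset ℕ, ∑ n ∈ F, ‖(inner ℂ h (ξ n) : ℂ)‖ ^ 2 ≤ B * ‖h‖ ^ 2

/-- `φ` is a Riesz basis: complete, and `A ∑|cₙ|² ≤ ‖∑ cₙ φₙ‖² ≤ B ∑|cₙ|²` for `(cₙ) ∈ ℓ²`. -/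
def RieszBasis {H : Type*} [NormedAddCommGroup H] [InnerProductSpace ℂ H] (φ : ℕ → H) : Prop :=
  (Submodule.span ℂ (Set.range φ)).topologicalClosure = ⊤ ∧
  ∃ A B : ℝ, 0 < A ∧ ∀ c : ℕ → ℂ, Summable (fun n => ‖c n‖ ^ 2) →
    ∃ s : H, HasSum (fun n => c n • φ n) s ∧
      A * ∑' n, ‖c n‖ ^ 2 ≤ ‖s‖ ^ 2 ∧ ‖s‖ ^ 2 ≤ B * ∑' n, ‖c n‖ ^ 2

section Aux

variable {G : Type*} [NormedAddCommGroup G]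

/-- The chain of finsets used to build a bad permutation. -/
noncomputable def chainC (φ : ℕ → G)
    (hb : ∀ C : ℝ, ∃ F : Finset ℕ, C < ‖∑ n ∈ F, φ n‖) : ℕ → Finset ℕ
  | 0 => ∅
  | (m+1) =>
      if Even m then chainC φ hb m ∪ Finset.range m
      else chainC φ hb m ∪ (hb (1 + ∑ i ∈ chainC φ hb m, ‖φ i‖)).choose

/-- The list of elements enumerated up to stage `m`. -/
noncomputable def preL (φ : ℕ → G)
    (hb : ∀ C : ℝ, ∃ F : Finset ℕ, C < ‖∑ n ∈ F, φ n‖) : ℕ → List ℕ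
  | 0 => []
  | (m+1) => preL φ hb m ++ (chainC φ hb (m+1) \ chainC φ hb m).sort (· ≤ ·)

lemma chainC_subset_succ (φ : ℕ → G) (hb) (m : ℕ) :
    chainC φ hb m ⊆ chainC φ hb (m+1) := by
  rw [chainC]
  split <;> exact Finset.subset_union_left

lemma chainC_mono (φ : ℕ → G) (hb) : Monotone (chainC φ hb) :=
  monotone_nat_of_le_succ (chainC_subset_succ φ hb)

lemma range_subset_chainC (φ : ℕ → G) (hb) (m : ℕ) (hm : Even m) :
    Finset.range m ⊆ chainC φ hb (m+1) := by
  rw [chainC, if_pos hm]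
  exact Finset.subset_union_right

lemma key_chainC (φ : ℕ → G) (hb) (k : ℕ) :
    1 < ‖∑ n ∈ chainC φ hb (2*k+2) \ chainC φ hb (2*k+1), φ n‖ := by
  have hodd : ¬ Even (2*k+1) := by simp [Nat.even_add_one, parity_simps]
  set s := chainC φ hb (2*k+1) with hs
  have hC : chainC φ hb (2*k+2) = s ∪ (hb (1 + ∑ i ∈ s, ‖φ i‖)).choose := by
    rw [show 2*k+2 = (2*k+1)+1 from rfl, chainC, if_neg hodd]
  set F := (hb (1 + ∑ i ∈ s, ‖φ i‖)).choose with hF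
  have hFs : 1 + ∑ i ∈ s, ‖φ i‖ < ‖∑ n ∈ F, φ n‖ :=
    (hb (1 + ∑ i ∈ s, ‖φ i‖)).choose_spec
  have hdiff : chainC φ hb (2*k+2) \ s = F \ s := by
    rw [hC]; ext x; simp [Finset.mem_sdiff, Finset.mem_union]; tauto
  rw [hdiff]
  have hsplit : ∑ n ∈ F ∩ s, φ n + ∑ n ∈ F \ s, φ n = ∑ n ∈ F, φ n :=
    Finset.sum_inter_add_sum_sdiff F s φ
  have h1 : ‖∑ n ∈ F, φ n‖ ≤ ‖∑ n ∈ F ∩ s, φ n‖ + ‖∑ n ∈ F \ s, φ n‖ := by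
    rw [← hsplit]; exact norm_add_le _ _
  have h2 : ‖∑ n ∈ F ∩ s, φ n‖ ≤ ∑ i ∈ s, ‖φ i‖ := by
    calc ‖∑ n ∈ F ∩ s, φ n‖ ≤ ∑ n ∈ F ∩ s, ‖φ n‖ := norm_sum_le _ _
    _ ≤ ∑ i ∈ s, ‖φ i‖ :=
        Finset.sum_le_sum_of_subset_of_nonneg Finset.inter_subset_right
          (fun i _ _ => norm_nonneg _)
  linarith

lemma mem_chainC (φ : ℕ → G) (hb) (n : ℕ) : n ∈ chainC φ hb (2*n+3) := by
  have he : Even (2*n+2) := by simp [parity_simps]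
  have := range_subset_chainC φ hb (2*n+2) he
  exact this (Finset.mem_range.2 (by omega))

lemma card_chainC (φ : ℕ → G) (hb) (k : ℕ) : 2*k ≤ (chainC φ hb (2*k+1)).card := by
  have he : Even (2*k) := by simp [parity_simps]
  have := Finset.card_le_card (range_subset_chainC φ hb (2*k) he)
  simpa using this

lemma preL_toFinset (φ : ℕ → G) (hb) (m : ℕ) :
    (preL φ hb m).toFinset = chainC φ hb m := by
  induction m with
  | zero => simp [preL, chainC]
  | succ m ih =>
      rw [preL, List.toFinset_append, ih, Finset.sort_toFinset]
      exact Finset.union_sdiff_of_subset (chainC_subset_succ φ hb m)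

lemma preL_nodup (φ : ℕ → G) (hb) (m : ℕ) : (preL φ hb m).Nodup := by
  induction m with
  | zero => simp [preL]
  | succ m ih =>
      rw [preL]
      refine ih.append (Finset.sort_nodup _ _) ?_
      intro a ha ha'
      have h1 : a ∈ chainC φ hb m := by
        rw [← preL_toFinset φ hb m]; exact List.mem_toFinset.2 ha
      have h2 : a ∈ chainC φ hb (m+1) \ chainC φ hb m := (Finset.mem_sort _).1 ha'
      exact (Finset.mem_sdiff.1 h2).2 h1

lemma preL_prefix (φ : ℕ → G) (hb) {k m : ℕ} (h : k ≤ m) :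
    preL φ hb k <+: preL φ hb m := by
  induction m with
  | zero => simp_all
  | succ m ih =>
      rcases Nat.lt_or_ge k (m+1) with h' | h'
      · exact (ih (Nat.lt_succ_iff.1 h')).trans ⟨_, rfl⟩
      · have : k = m + 1 := le_antisymm h h'
        subst this; exact List.prefix_rfl

lemma preL_length (φ : ℕ → G) (hb) (m : ℕ) :
    (preL φ hb m).length = (chainC φ hb m).card := by
  rw [← preL_toFinset φ hb m, List.toFinset_card_of_nodup (preL_nodup φ hb m)]

/-- The enumeration function. -/
noncomputable def gfun (φ : ℕ → G) (hb : ∀ C : ℝ, ∃ F : Finset ℕ, C < ‖∑ n ∈ F, φ n‖) (n : ℕ) : ℕ := (preL φ hb (2*n+3)).getD n 0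

lemma lt_length_of (φ : ℕ → G) (hb) (n : ℕ) : n < (preL φ hb (2*n+3)).length := by
  rw [preL_length]
  have := card_chainC φ hb (n+1)
  have hmono := Finset.card_le_card (chainC_mono φ hb (show 2*(n+1)+1 ≤ 2*n+3 by omega))
  omega

lemma gfun_eq (φ : ℕ → G) (hb) {m n : ℕ} (h : n < (preL φ hb m).length) :
    (preL φ hb m).getD n 0 = gfun φ hb n := by
  have hn := lt_length_of φ hb n
  rcases le_total m (2*n+3) with hle | hle
  · have hp := preL_prefix φ hb hle
    rw [List.getD_eq_getElem _ _ h, gfun, List.getD_eq_getElem _ _ hn]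
    exact hp.getElem h
  · have hp := preL_prefix φ hb hle
    rw [List.getD_eq_getElem _ _ h, gfun, List.getD_eq_getElem _ _ hn]
    exact (hp.getElem hn).symm

lemma gfun_injective (φ : ℕ → G) (hb) : Function.Injective (gfun φ hb) := by
  intro n m hnm
  by_contra hne
  wlog hlt : n < m generalizing n m
  · exact this hnm.symm (Ne.symm hne) (by omega)
  have hm := lt_length_of φ hb m
  have hn : n < (preL φ hb (2*m+3)).length := lt_of_lt_of_le (lt_of_lt_of_le hlt hm.le) le_rfl
  have e1 : (preL φ hb (2*m+3)).getD n 0 = gfun φ hb n := gfun_eq φ hb hn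
  have e2 : (preL φ hb (2*m+3)).getD m 0 = gfun φ hb m := gfun_eq φ hb hm
  rw [List.getD_eq_getElem _ _ hn] at e1
  rw [List.getD_eq_getElem _ _ hm] at e2
  have := (List.Nodup.getElem_inj_iff (preL_nodup φ hb (2*m+3))).1
    (e1.trans (hnm.trans e2.symm))
  omega

lemma gfun_surjective (φ : ℕ → G) (hb) : Function.Surjective (gfun φ hb) := by
  intro x
  have hx : x ∈ (preL φ hb (2*x+3)).toFinset := by
    rw [preL_toFinset]; exact mem_chainC φ hb x
  obtain ⟨i, hi, hix⟩ := List.getElem_of_mem (List.mem_toFinset.1 hx)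
  exact ⟨i, by rw [← gfun_eq φ hb hi, List.getD_eq_getElem _ _ hi, hix]⟩

lemma list_sum_range {M : Type*} [AddCommMonoid M] (f : ℕ → M) (l : List ℕ) :
    ∑ n ∈ Finset.range l.length, f (l.getD n 0) = (l.map f).sum := by
  induction l with
  | nil => simp
  | cons a t ih =>
      rw [List.length_cons, Finset.sum_range_succ', List.map_cons, List.sum_cons]
      simp only [List.getD_cons_succ, List.getD_cons_zero]
      rw [ih, add_comm]

lemma partial_sum_eq (φ : ℕ → G) (hb) (m : ℕ) :
    ∑ n ∈ Finset.range (chainC φ hb m).card, φ (gfun φ hb n) =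
      ∑ x ∈ chainC φ hb m, φ x := by
  have h1 : ∑ n ∈ Finset.range (chainC φ hb m).card, φ (gfun φ hb n) =
      ∑ n ∈ Finset.range (preL φ hb m).length, φ ((preL φ hb m).getD n 0) := by
    rw [preL_length]
    refine Finset.sum_congr rfl fun n hn => ?_
    rw [gfun_eq φ hb (by rw [preL_length]; exact Finset.mem_range.1 hn)]
  rw [h1, list_sum_range, ← List.sum_toFinset φ (preL_nodup φ hb m), preL_toFinset]

/-- Boundedness of subset sums from unconditional convergence. -/
lemma bounded_of_uncond (φ : ℕ → G)
    (h : ∀ σ : Equiv.Perm ℕ, ∃ L : G,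
      Tendsto (fun N => ∑ n ∈ Finset.range N, φ (σ n)) atTop (nhds L)) :
    ∃ C : ℝ, ∀ F : Finset ℕ, ‖∑ n ∈ F, φ n‖ ≤ C := by
  by_contra hc
  push_neg at hc
  have hb : ∀ C : ℝ, ∃ F : Finset ℕ, C < ‖∑ n ∈ F, φ n‖ := hc
  set σ : Equiv.Perm ℕ := Equiv.ofBijective (gfun φ hb)
    ⟨gfun_injective φ hb, gfun_surjective φ hb⟩ with hσ
  obtain ⟨L, hL⟩ := h σ
  have hcauchy : CauchySeq (fun N => ∑ n ∈ Finset.range N, φ (σ n)) := hL.cauchySeq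
  rw [Metric.cauchySeq_iff] at hcauchy
  obtain ⟨N, hN⟩ := hcauchy 1 one_pos
  set k := N
  have hlen1 : N ≤ (chainC φ hb (2*k+1)).card := le_trans (by omega) (card_chainC φ hb k)
  have hlen2 : N ≤ (chainC φ hb (2*k+2)).card :=
    le_trans hlen1 (Finset.card_le_card (chainC_mono φ hb (by omega)))
  have hdist := hN _ hlen2 _ hlen1
  have hσg : ∀ n, σ n = gfun φ hb n := fun n => rfl
  have e1 : ∑ n ∈ Finset.range (chainC φ hb (2*k+2)).card, φ (σ n) =
      ∑ x ∈ chainC φ hb (2*k+2), φ x := by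
    simp only [hσg]; exact partial_sum_eq φ hb _
  have e2 : ∑ n ∈ Finset.range (chainC φ hb (2*k+1)).card, φ (σ n) =
      ∑ x ∈ chainC φ hb (2*k+1), φ x := by
    simp only [hσg]; exact partial_sum_eq φ hb _
  rw [dist_eq_norm, e1, e2] at hdist
  have hsub : chainC φ hb (2*k+1) ⊆ chainC φ hb (2*k+2) := chainC_subset_succ φ hb _
  rw [← Finset.sum_sdiff_eq_sub hsub] at hdist
  exact absurd hdist (not_lt.2 (key_chainC φ hb k).le)

end Aux

/-- Sign choice via the parallelogram law. -/
lemma exists_signs (φ : ℕ → H) (F : Finset ℕ) :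
    ∃ ε : ℕ → ℝ, (∀ n, ε n = 1 ∨ ε n = -1) ∧
      ∑ n ∈ F, ‖φ n‖ ^ 2 ≤ ‖∑ n ∈ F, ε n • φ n‖ ^ 2 := by
  classical
  induction F using Finset.induction_on with
  | empty => exact ⟨fun _ => 1, fun _ => Or.inl rfl, by simp⟩
  | @insert a s ha ih =>
      obtain ⟨ε, hsign, hle⟩ := ih
      set t := ∑ n ∈ s, ε n • φ n with ht
      have hpar := parallelogram_law_with_norm ℂ t (φ a)
      have hsum : ∀ c : ℝ, ∑ n ∈ s, (Function.update ε a c) n • φ n = t := by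
        intro c
        refine Finset.sum_congr rfl fun n hn => ?_
        rw [Function.update_of_ne (by rintro rfl; exact ha hn)]
      rcases le_or_gt (‖t‖ ^ 2 + ‖φ a‖ ^ 2) (‖t + φ a‖ ^ 2) with hcase | hcase
      · refine ⟨Function.update ε a 1, ?_, ?_⟩
        · intro n
          rcases eq_or_ne n a with rfl | hne
          · simp
          · rw [Function.update_of_ne hne]; exact hsign n
        · rw [Finset.sum_insert ha, Finset.sum_insert ha, hsum]
          simp only [Function.update_self, one_smul]
          have : ∑ n ∈ s, ‖φ n‖ ^ 2 ≤ ‖t‖ ^ 2 := hle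
          calc ‖φ a‖ ^ 2 + ∑ n ∈ s, ‖φ n‖ ^ 2 ≤ ‖φ a‖ ^ 2 + ‖t‖ ^ 2 := by linarith
          _ ≤ ‖φ a + t‖ ^ 2 := by rw [add_comm (φ a) t]; linarith
      · refine ⟨Function.update ε a (-1), ?_, ?_⟩
        · intro n
          rcases eq_or_ne n a with rfl | hne
          · simp
          · rw [Function.update_of_ne hne]; exact hsign n
        · rw [Finset.sum_insert ha, Finset.sum_insert ha, hsum]
          simp only [Function.update_self, neg_one_smul]
          have h2 : ‖t‖ ^ 2 + ‖φ a‖ ^ 2 ≤ ‖t - φ a‖ ^ 2 := by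
            have e1 : ‖t + φ a‖ * ‖t + φ a‖ = ‖t + φ a‖ ^ 2 := (sq _).symm
            have e2 : ‖t - φ a‖ * ‖t - φ a‖ = ‖t - φ a‖ ^ 2 := (sq _).symm
            have e3 : ‖t‖ * ‖t‖ = ‖t‖ ^ 2 := (sq _).symm
            have e4 : ‖φ a‖ * ‖φ a‖ = ‖φ a‖ ^ 2 := (sq _).symm
            nlinarith [hpar]
          have : ∑ n ∈ s, ‖φ n‖ ^ 2 ≤ ‖t‖ ^ 2 := hle
          have heq : -φ a + t = t - φ a := by abel
          rw [heq]
          linarith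

theorem stmt0 (φ : ℕ → H) (h : UncondConv φ) : Summable (fun n => ‖φ n‖ ^ 2) := by
  classical
  obtain ⟨C, hC⟩ := bounded_of_uncond φ h
  have hC0 : 0 ≤ C := le_trans (by simp) (hC ∅)
  refine summable_of_sum_le (c := (2*C)^2) (fun n => sq_nonneg _) (fun F => ?_)
  obtain ⟨ε, hsign, hle⟩ := exists_signs φ F
  have hbound : ‖∑ n ∈ F, ε n • φ n‖ ≤ 2 * C := by
    set P := F.filter (fun n => ε n = 1) with hP
    have hPF : P ⊆ F := Finset.filter_subset _ _
    have hsplit0 : ∑ n ∈ F \ P, ε n • φ n + ∑ n ∈ P, ε n • φ n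
        = ∑ n ∈ F, ε n • φ n := Finset.sum_sdiff hPF
    have e1 : ∑ n ∈ P, ε n • φ n = ∑ n ∈ P, φ n := by
      refine Finset.sum_congr rfl fun n hn => ?_
      rw [(Finset.mem_filter.1 hn).2, one_smul]
    have e2 : ∑ n ∈ F \ P, ε n • φ n = -∑ n ∈ F \ P, φ n := by
      rw [← Finset.sum_neg_distrib]
      refine Finset.sum_congr rfl fun n hn => ?_
      have hn' : n ∉ P := (Finset.mem_sdiff.1 hn).2
      have hne : ε n = -1 := (hsign n).resolve_left
        (fun h1 => hn' (Finset.mem_filter.2 ⟨(Finset.mem_sdiff.1 hn).1, h1⟩))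
      rw [hne, neg_one_smul]
    have hsplit : ∑ n ∈ F, ε n • φ n = ∑ n ∈ P, φ n - ∑ n ∈ F \ P, φ n := by
      rw [← hsplit0, e1, e2]; abel
    rw [hsplit]
    calc ‖∑ n ∈ P, φ n - ∑ n ∈ F \ P, φ n‖
        ≤ ‖∑ n ∈ P, φ n‖ + ‖∑ n ∈ F \ P, φ n‖ := norm_sub_le _ _
      _ ≤ C + C := add_le_add (hC P) (hC (F \ P))
      _ = 2 * C := by ring
  calc ∑ n ∈ F, ‖φ n‖ ^ 2 ≤ ‖∑ n ∈ F, ε n • φ n‖ ^ 2 := hle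
    _ ≤ (2 * C) ^ 2 := by
        have := norm_nonneg (∑ n ∈ F, ε n • φ n)
        nlinarith
end

section
/- The multiplier M_{m,Φ,Ψ} is unconditionally convergent on H if and only if M_{\bar m,Ψ,Φ} is unconditionally convergent on H. -/
open scoped BigOperators ComplexConjugate
open Filter Finset

variable {H : Type*} [NormedAddCommGroup H] [InnerProductSpace ℂ H] [CompleteSpace H]

local notation "⟪" x ", " y "⟫" => @inner ℂ _ _ x y

theorem uncondConv_vanishing {E : Type*} [NormedAddCommGroup E] {x : ℕ → E}
    (hx : UncondConv x) :
    ∀ ε > (0:ℝ), ∃ N : ℕ, ∀ G : Finset ℕ, (∀ n ∈ G, N ≤ n) → ‖∑ n ∈ G, x n‖ < ε := by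
  by_contra hcon
  push_neg at hcon
  obtain ⟨ε, hε, hb⟩ := hcon
  choose gf hg1 hg2 using hb
  have hne : ∀ N, (gf N).Nonempty := by
    intro N
    rcases Finset.eq_empty_or_nonempty (gf N) with h | h
    · exfalso
      have h2 := hg2 N
      rw [h] at h2
      simp only [Finset.sum_empty, norm_zero] at h2
      linarith
    · exact h
  let M : ℕ → ℕ := fun k => Nat.rec 0 (fun _ Mk => (gf Mk).max' (hne Mk) + 1) k
  have hM0 : M 0 = 0 := rfl
  have hMsucc : ∀ k, M (k + 1) = (gf (M k)).max' (hne (M k)) + 1 := fun k => rfl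
  let G : ℕ → Finset ℕ := fun k => gf (M k)
  have hGsub : ∀ k, G k ⊆ Finset.Ico (M k) (M (k+1)) := by
    intro k n hn
    rw [Finset.mem_Ico]
    refine ⟨hg1 _ _ hn, ?_⟩
    rw [hMsucc]
    exact Nat.lt_succ_of_le (Finset.le_max' _ _ hn)
  have hMlt : ∀ k, M k < M (k + 1) := by
    intro k
    have h1 : (gf (M k)).max' (hne (M k)) ∈ gf (M k) := Finset.max'_mem _ _
    have h2 := hg1 _ _ h1
    rw [hMsucc]
    omega
  have hMmono : StrictMono M := strictMono_nat_of_lt_succ hMlt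
  have hMge : ∀ k, k ≤ M k := by
    intro k; induction k with
    | zero => omega
    | succ k ih => have := hMlt k; omega
  have hcard : ∀ k, (G k).card ≤ M (k+1) - M k := by
    intro k
    have := Finset.card_le_card (hGsub k)
    rwa [Nat.card_Ico] at this
  let C : ℕ → Finset ℕ := fun k => Finset.Ico (M k) (M (k+1)) \ G k
  let L : ℕ → List ℕ := fun k => (C k).sort (· ≤ ·) ++ (G k).sort (· ≤ ·)
  have hCcard : ∀ k, (C k).card = (M (k+1) - M k) - (G k).card := by
    intro k
    rw [Finset.card_sdiff_of_subset (hGsub k), Nat.card_Ico]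
  have hLlen : ∀ k, (L k).length = M (k+1) - M k := by
    intro k
    have h1 : (L k).length = (C k).card + (G k).card := by
      simp [L, List.length_append]
    rw [h1, hCcard k]
    have := hcard k
    omega
  have hLmem : ∀ k n, n ∈ L k ↔ n ∈ Finset.Ico (M k) (M (k+1)) := by
    intro k n
    simp only [L, List.mem_append, Finset.mem_sort, Finset.mem_sdiff, C]
    constructor
    · rintro (⟨h1, _⟩ | h)
      · exact h1
      · exact hGsub k h
    · intro h
      by_cases hg : n ∈ G k
      · exact Or.inr hg
      · exact Or.inl ⟨h, hg⟩
  have hLnodup : ∀ k, (L k).Nodup := by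
    intro k
    rw [List.nodup_append]
    refine ⟨Finset.sort_nodup _ _, Finset.sort_nodup _ _, ?_⟩
    intro a ha c hb' hac
    rw [Finset.mem_sort] at ha hb'
    simp only [C, Finset.mem_sdiff] at ha
    exact ha.2 (hac ▸ hb')
  let Kf : ℕ → ℕ := fun i => @Nat.findGreatest (fun k => M k ≤ i) (fun _ => Nat.decLe _ _) i
  have hK1 : ∀ i, M (Kf i) ≤ i := by
    intro i
    exact @Nat.findGreatest_spec 0 (fun k => M k ≤ i) (fun k => Nat.decLe _ _) i
      (Nat.zero_le i) (le_trans (le_of_eq hM0) (Nat.zero_le i))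
  have hK2 : ∀ i, i < M (Kf i + 1) := by
    intro i
    by_contra hcc
    push_neg at hcc
    exact @Nat.findGreatest_is_greatest (Kf i + 1) (fun k => M k ≤ i) (fun _ => Nat.decLe _ _) i
      (Nat.lt_succ_self _) (le_trans (hMge _) hcc) hcc
  have hKuniq : ∀ k i, M k ≤ i → i < M (k+1) → Kf i = k := by
    intro k i h1 h2
    have hle : k ≤ Kf i := @Nat.le_findGreatest k (fun j => M j ≤ i) (fun _ => Nat.decLe _ _) i
      (le_trans (hMge k) h1) h1
    rcases Nat.lt_or_ge (Kf i) (k+1) with h | h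
    · omega
    · exfalso
      have h3 : M (k+1) ≤ M (Kf i) := hMmono.monotone h
      have h4 := hK1 i
      omega
  have hidx : ∀ i, i - M (Kf i) < (L (Kf i)).length := by
    intro i
    rw [hLlen]
    have := hK1 i
    have := hK2 i
    omega
  let σf : ℕ → ℕ := fun i => (L (Kf i)).getD (i - M (Kf i)) 0
  have hσval : ∀ i, σf i = (L (Kf i))[i - M (Kf i)]'(hidx i) := by
    intro i
    exact List.getD_eq_getElem _ _ (hidx i)
  have hσmem : ∀ i, σf i ∈ Finset.Ico (M (Kf i)) (M (Kf i + 1)) := by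
    intro i
    rw [← hLmem, hσval]
    exact List.getElem_mem _
  have hinj : Function.Injective σf := by
    intro i j hij
    rcases eq_or_ne (Kf i) (Kf j) with hk | hk
    · rw [hσval, hσval] at hij
      have hbj : j - M (Kf i) < (L (Kf i)).length := by
        rw [hk]; exact hidx j
      have hij' : (L (Kf i))[i - M (Kf i)]'(hidx i) = (L (Kf i))[j - M (Kf i)]'hbj := by
        rw [hij]
        congr 1 <;> rw [hk]
      have := ((hLnodup (Kf i)).getElem_inj_iff).mp hij'
      have h1 := hK1 i
      have h2 := hK1 j
      rw [← hk] at h2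
      omega
    · exfalso
      have h1 := hσmem i
      have h2 := hσmem j
      rw [Finset.mem_Ico] at h1 h2
      rw [hij] at h1
      rcases Nat.lt_or_ge (Kf i) (Kf j) with h | h
      · have : M (Kf i + 1) ≤ M (Kf j) := hMmono.monotone h
        omega
      · have h' : Kf j < Kf i := by omega
        have : M (Kf j + 1) ≤ M (Kf i) := hMmono.monotone h'
        omega
  have hsurj : Function.Surjective σf := by
    intro n
    have hn : n ∈ L (Kf n) := by
      rw [hLmem]
      exact Finset.mem_Ico.mpr ⟨hK1 n, hK2 n⟩
    obtain ⟨p, hp, hpn⟩ := List.mem_iff_getElem.mp hn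
    refine ⟨M (Kf n) + p, ?_⟩
    have hlt : M (Kf n) + p < M (Kf n + 1) := by
      have := hLlen (Kf n)
      have := hMlt (Kf n)
      omega
    have hkk : Kf (M (Kf n) + p) = Kf n := hKuniq _ _ (Nat.le_add_right _ _) hlt
    have hb2 : M (Kf n) + p - M (Kf n) < (L (Kf n)).length := by
      rw [hLlen]; omega
    show (L (Kf (M (Kf n) + p))).getD (M (Kf n) + p - M (Kf (M (Kf n) + p))) 0 = n
    rw [hkk, List.getD_eq_getElem _ _ hb2]
    have hpe : M (Kf n) + p - M (Kf n) = p := by omega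
    simp only [hpe]
    exact hpn
  let σe : Equiv.Perm ℕ := Equiv.ofBijective σf ⟨hinj, hsurj⟩
  obtain ⟨Lim, hLim⟩ := hx σe
  have hcauchy := hLim.cauchySeq
  rw [Metric.cauchySeq_iff] at hcauchy
  obtain ⟨N₀, hN₀⟩ := hcauchy ε hε
  set k := N₀ with hk
  have hcgk := hcard k
  have hmltk := hMlt k
  set a := M (k+1) - (G k).card with ha
  set b := M (k+1) with hbdef
  have hka : M k ≤ a := by omega
  have hab : a ≤ b := by omega
  have haN : N₀ ≤ a := le_trans (hMge k) hka
  have hbN : N₀ ≤ b := le_trans haN hab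
  have hd := hN₀ b hbN a haN
  have hσe : ∀ i, σe i = σf i := fun i => rfl
  have himg : (Finset.Ico a b).image σf = G k := by
    apply Finset.eq_of_subset_of_card_le
    · intro n hn
      obtain ⟨i, hi, rfl⟩ := Finset.mem_image.mp hn
      rw [Finset.mem_Ico] at hi
      have hki : Kf i = k := hKuniq k i (le_trans hka hi.1) hi.2
      have hbnd : i - M k < (L k).length := by rw [hLlen]; omega
      show (L (Kf i)).getD (i - M (Kf i)) 0 ∈ G k
      rw [hki, List.getD_eq_getElem _ _ hbnd]
      have hcl : ((C k).sort (· ≤ ·)).length ≤ i - M k := by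
        rw [Finset.length_sort, hCcard k]
        omega
      have hbnd2 : i - M k < ((C k).sort (· ≤ ·) ++ (G k).sort (· ≤ ·)).length := hbnd
      show ((C k).sort (· ≤ ·) ++ (G k).sort (· ≤ ·))[i - M k]'hbnd2 ∈ G k
      rw [List.getElem_append_right hcl]
      rw [← Finset.mem_sort (α := ℕ) (· ≤ ·)]
      exact List.getElem_mem _
    · rw [Finset.card_image_of_injective _ hinj, Nat.card_Ico]
      omega
  have hsum : ∑ i ∈ Finset.Ico a b, x (σf i) = ∑ n ∈ G k, x n := by
    rw [← himg, Finset.sum_image (fun x _ y _ h => hinj h)]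
  have hdist : dist (∑ n ∈ Finset.range b, x (σe n)) (∑ n ∈ Finset.range a, x (σe n))
      = ‖∑ n ∈ G k, x n‖ := by
    rw [dist_eq_norm, ← Finset.sum_Ico_eq_sub _ hab, ← hsum]
    rfl
  have hεle : ε ≤ ‖∑ n ∈ G k, x n‖ := hg2 (M k)
  rw [hdist] at hd
  linarith

theorem uncondConv_summable {E : Type*} [NormedAddCommGroup E] [CompleteSpace E] {x : ℕ → E}
    (hx : UncondConv x) : Summable x := by
  rw [summable_iff_vanishing_norm]
  intro ε hε
  obtain ⟨N, hN⟩ := uncondConv_vanishing hx ε hε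
  refine ⟨Finset.range N, fun t ht => hN t fun n hn => ?_⟩
  by_contra hcc
  push_neg at hcc
  exact Finset.disjoint_left.mp ht hn (Finset.mem_range.mpr hcc)

theorem key_summable (φ ψ : ℕ → H) (m : ℕ → ℂ)
    (h : ∀ f : H, UncondConv (fun n => (m n * ⟪f, ψ n⟫) • φ n)) (g : H) :
    Summable (fun n => (conj (m n) * ⟪g, φ n⟫) • ψ n) := by
  have hsummable : ∀ f : H, Summable (fun n => (m n * ⟪f, ψ n⟫) • φ n) :=
    fun f => uncondConv_summable (h f)
  have habs : ∀ f : H, Summable (fun n => ‖m n * ⟪f, ψ n⟫ * ⟪g, φ n⟫‖) := by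
    intro f
    have h1 : Summable (fun n => (innerSL ℂ g) ((m n * ⟪f, ψ n⟫) • φ n)) :=
      (hsummable f).mapL _
    have h2 : Summable (fun n => m n * ⟪f, ψ n⟫ * ⟪g, φ n⟫) := by
      have he : (fun n => (innerSL ℂ g) ((m n * ⟪f, ψ n⟫) • φ n))
          = fun n => m n * ⟪f, ψ n⟫ * ⟪g, φ n⟫ := by
        funext n
        rw [innerSL_apply_apply, inner_smul_right]
      rwa [he] at h1
    exact h2.norm
  -- uniform bound via Banach–Steinhaus
  obtain ⟨Cb, hCb⟩ : ∃ Cb : ℝ, ∀ p : Finset ℕ × {u : ℕ → ℂ // ∀ n, ‖u n‖ ≤ ‖m n‖ * ‖⟪g, φ n⟫‖},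
      ‖(∑ n ∈ p.1, (p.2.1 n) • innerSL ℂ (ψ n) : H →L[ℂ] ℂ)‖ ≤ Cb := by
    apply banach_steinhaus
    intro f
    refine ⟨∑' n, ‖m n * ⟪f, ψ n⟫ * ⟪g, φ n⟫‖, ?_⟩
    rintro ⟨G, u, hu⟩
    have hΛ : ((∑ n ∈ G, (u n) • innerSL ℂ (ψ n) : H →L[ℂ] ℂ)) f
        = ∑ n ∈ G, u n * ⟪ψ n, f⟫ := by
      simp [ContinuousLinearMap.sum_apply, ContinuousLinearMap.smul_apply, innerSL_apply_apply,
        smul_eq_mul]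
    rw [hΛ]
    calc ‖∑ n ∈ G, u n * ⟪ψ n, f⟫‖ ≤ ∑ n ∈ G, ‖u n * ⟪ψ n, f⟫‖ := norm_sum_le _ _
      _ ≤ ∑ n ∈ G, ‖m n * ⟪f, ψ n⟫ * ⟪g, φ n⟫‖ := by
          apply Finset.sum_le_sum
          intro n _
          rw [norm_mul, norm_inner_symm (ψ n) f]
          calc ‖u n‖ * ‖⟪f, ψ n⟫‖ ≤ (‖m n‖ * ‖⟪g, φ n⟫‖) * ‖⟪f, ψ n⟫‖ :=
                mul_le_mul_of_nonneg_right (hu n) (norm_nonneg _)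
            _ = ‖m n * ⟪f, ψ n⟫ * ⟪g, φ n⟫‖ := by rw [norm_mul, norm_mul]; ring
      _ ≤ ∑' n, ‖m n * ⟪f, ψ n⟫ * ⟪g, φ n⟫‖ :=
          Summable.sum_le_tsum G (fun n _ => norm_nonneg _) (habs f)
  have hCb0 : 0 ≤ Cb := le_trans (norm_nonneg _)
    (hCb (∅, ⟨fun _ => 0, fun n => by simp only [norm_zero]; positivity⟩))
  -- uniform bound on weighted partial sums
  have hbound : ∀ (G : Finset ℕ) (b : ℕ → ℂ), (∀ n, ‖b n‖ ≤ 1) →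
      ‖∑ n ∈ G, (b n * (conj (m n) * ⟪g, φ n⟫)) • ψ n‖ ≤ Cb := by
    intro G b hb
    set v : H := ∑ n ∈ G, (b n * (conj (m n) * ⟪g, φ n⟫)) • ψ n with hv
    have hu : ∀ n, ‖conj (b n * (conj (m n) * ⟪g, φ n⟫))‖ ≤ ‖m n‖ * ‖⟪g, φ n⟫‖ := by
      intro n
      rw [RCLike.norm_conj, norm_mul, norm_mul, RCLike.norm_conj]
      calc ‖b n‖ * (‖m n‖ * ‖⟪g, φ n⟫‖) ≤ 1 * (‖m n‖ * ‖⟪g, φ n⟫‖) :=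
            mul_le_mul_of_nonneg_right (hb n) (by positivity)
        _ = ‖m n‖ * ‖⟪g, φ n⟫‖ := one_mul _
    set p : Finset ℕ × {u : ℕ → ℂ // ∀ n, ‖u n‖ ≤ ‖m n‖ * ‖⟪g, φ n⟫‖} :=
      (G, ⟨fun n => conj (b n * (conj (m n) * ⟪g, φ n⟫)), hu⟩) with hp
    have e1 : ((∑ n ∈ p.1, (p.2.1 n) • innerSL ℂ (ψ n) : H →L[ℂ] ℂ)) v = ⟪v, v⟫ := by
      have ha1 : ((∑ n ∈ p.1, (p.2.1 n) • innerSL ℂ (ψ n) : H →L[ℂ] ℂ)) v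
          = ∑ n ∈ G, conj (b n * (conj (m n) * ⟪g, φ n⟫)) * ⟪ψ n, v⟫ := by
        simp [p, ContinuousLinearMap.sum_apply, ContinuousLinearMap.smul_apply, innerSL_apply_apply,
          smul_eq_mul]
      rw [ha1, hv, sum_inner]
      apply Finset.sum_congr rfl
      intro n _
      rw [inner_smul_left]
    have hv2 : ‖v‖ ^ 2 ≤ Cb * ‖v‖ := by
      calc ‖v‖ ^ 2 = RCLike.re ⟪v, v⟫ := (inner_self_eq_norm_sq v).symm
        _ ≤ ‖⟪v, v⟫‖ := RCLike.re_le_norm _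
        _ = ‖((∑ n ∈ p.1, (p.2.1 n) • innerSL ℂ (ψ n) : H →L[ℂ] ℂ)) v‖ := by rw [e1]
        _ ≤ ‖(∑ n ∈ p.1, (p.2.1 n) • innerSL ℂ (ψ n) : H →L[ℂ] ℂ)‖ * ‖v‖ :=
            ContinuousLinearMap.le_opNorm _ _
        _ ≤ Cb * ‖v‖ := mul_le_mul_of_nonneg_right (hCb p) (norm_nonneg _)
    nlinarith [norm_nonneg v]
  -- summability by contradiction
  by_contra hns
  rw [summable_iff_vanishing_norm] at hns
  push_neg at hns
  obtain ⟨ε, hε, hblk⟩ := hns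
  choose tf ht1 ht2 using hblk
  let A : ℕ → Finset ℕ := fun K => Nat.rec ∅ (fun _ AK => AK ∪ tf AK) K
  have hA0 : A 0 = ∅ := rfl
  have hAs : ∀ K, A (K + 1) = A K ∪ tf (A K) := fun K => rfl
  have hclaim : ∀ K : ℕ, ∃ b : ℕ → ℂ, (∀ n, ‖b n‖ ≤ 1) ∧
      (K : ℝ) * ε ^ 2 ≤ ‖∑ n ∈ A K, (b n * (conj (m n) * ⟪g, φ n⟫)) • ψ n‖ ^ 2 := by
    intro K
    induction K with
    | zero =>
        refine ⟨fun _ => 1, fun n => by norm_num, ?_⟩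
        rw [hA0]
        simp
    | succ K ih =>
        obtain ⟨b, hb1, hb2⟩ := ih
        set V : H := ∑ n ∈ A K, (b n * (conj (m n) * ⟪g, φ n⟫)) • ψ n with hV
        set w : H := ∑ n ∈ tf (A K), (conj (m n) * ⟪g, φ n⟫) • ψ n with hw
        have hwε : ε ≤ ‖w‖ := ht2 (A K)
        have hdisj : Disjoint (A K) (tf (A K)) := (ht1 (A K)).symm
        set s : ℂ := if 0 ≤ RCLike.re ⟪V, w⟫ then 1 else -1 with hs
        have hs1 : ‖s‖ = 1 := by
          rw [hs]
          split_ifs <;> simp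
        have hsre : 0 ≤ RCLike.re ⟪V, s • w⟫ := by
          rw [inner_smul_right]
          rw [hs]
          split_ifs with hcase
          · simpa using hcase
          · push_neg at hcase
            rw [neg_mul, one_mul]
            simp only [map_neg]
            linarith
        refine ⟨fun n => if n ∈ tf (A K) then s else b n, ?_, ?_⟩
        · intro n
          show ‖(if n ∈ tf (A K) then s else b n)‖ ≤ 1
          split_ifs
          · rw [hs1]
          · exact hb1 n
        · rw [hAs K, Finset.sum_union hdisj]
          have e2 : ∑ n ∈ A K, ((if n ∈ tf (A K) then s else b n) * (conj (m n) * ⟪g, φ n⟫)) • ψ n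
              = V := by
            rw [hV]
            apply Finset.sum_congr rfl
            intro n hn
            have : n ∉ tf (A K) := Finset.disjoint_left.mp hdisj hn
            rw [if_neg this]
          have e3 : ∑ n ∈ tf (A K),
              ((if n ∈ tf (A K) then s else b n) * (conj (m n) * ⟪g, φ n⟫)) • ψ n = s • w := by
            rw [hw, Finset.smul_sum]
            apply Finset.sum_congr rfl
            intro n hn
            rw [if_pos hn, mul_smul]
          rw [e2, e3, norm_add_sq (𝕜 := ℂ)]
          have hsw : ‖s • w‖ = ‖w‖ := by rw [norm_smul, hs1, one_mul]
          rw [hsw]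
          push_cast
          nlinarith [hb2, hwε, hε]
  obtain ⟨K, hK⟩ := exists_nat_gt (Cb ^ 2 / ε ^ 2)
  obtain ⟨b, hb1, hb2⟩ := hclaim K
  have hle : ‖∑ n ∈ A K, (b n * (conj (m n) * ⟪g, φ n⟫)) • ψ n‖ ≤ Cb := hbound (A K) b hb1
  have hsq : ‖∑ n ∈ A K, (b n * (conj (m n) * ⟪g, φ n⟫)) • ψ n‖ ^ 2 ≤ Cb ^ 2 :=
    pow_le_pow_left₀ (norm_nonneg _) hle 2
  have hKε : Cb ^ 2 < (K : ℝ) * ε ^ 2 := by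
    rw [div_lt_iff₀ (by positivity)] at hK
    linarith
  linarith

theorem key_uncond (φ ψ : ℕ → H) (m : ℕ → ℂ)
    (h : ∀ f : H, UncondConv (fun n => (m n * ⟪f, ψ n⟫) • φ n)) (g : H) :
    UncondConv (fun n => (conj (m n) * ⟪g, φ n⟫) • ψ n) := by
  have hz := key_summable φ ψ m h g
  intro σ
  have hzs : Summable ((fun n => (conj (m n) * ⟪g, φ n⟫) • ψ n) ∘ σ) :=
    σ.summable_iff.mpr hz
  exact ⟨_, hzs.hasSum.tendsto_sum_nat⟩


theorem stmt6 (φ ψ : ℕ → H) (m : ℕ → ℂ) :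
    (∀ f : H, UncondConv (fun n => (m n * ⟪f, ψ n⟫) • φ n)) ↔
    (∀ g : H, UncondConv (fun n => (conj (m n) * ⟪g, φ n⟫) • ψ n)) := by
  constructor
  · exact fun h g => key_uncond φ ψ m h g
  · intro h f
    have := key_uncond ψ φ (fun n => conj (m n)) h f
    simpa using this
end

section
/- If M_{m,Φ,Ψ} is unconditionally convergent on H, then the sequence (mₙ ‖φₙ‖ ψₙ) is a Bessel sequence for H. -/
open scoped BigOperators ComplexConjugate
open Filter Finset

variable {H : Type*} [NormedAddCommGroup H] [InnerProductSpace ℂ H] [CompleteSpace H]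

local notation "⟪" x ", " y "⟫" => @inner ℂ _ _ x y

variable {E : Type*} [NormedAddCommGroup E]

lemma exists_blocks (a : ℕ → E)
    (hC : ∀ C : ℝ, ∃ F : Finset ℕ, C < ‖∑ n ∈ F, a n‖) :
    ∃ (M : ℕ → ℕ) (G : ℕ → Finset ℕ), M 0 = 0 ∧ StrictMono M ∧
      (∀ k, G k ⊆ Finset.Ico (M k) (M (k+1))) ∧
      (∀ k : ℕ, (k:ℝ) + 1 < ‖∑ n ∈ G k, a n‖) := by
  have step : ∀ (M : ℕ) (k : ℕ), ∃ (p : ℕ × Finset ℕ), M < p.1 ∧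
      p.2 ⊆ Finset.Ico M p.1 ∧ ((k:ℝ) + 1 < ‖∑ n ∈ p.2, a n‖) := by
    intro M k
    obtain ⟨F, hF⟩ := hC ((k:ℝ) + 1 + ∑ n ∈ Finset.range M, ‖a n‖)
    refine ⟨(max (M+1) ((F \ Finset.range M).sup id + 1), F \ Finset.range M), ?_, ?_, ?_⟩
    · exact lt_of_lt_of_le (Nat.lt_succ_self M) (le_max_left _ _)
    · intro n hn
      rw [Finset.mem_Ico]
      constructor
      · have := (Finset.mem_sdiff.mp hn).2
        simpa [Finset.mem_range, Nat.not_lt] using this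
      · exact lt_of_lt_of_le (Nat.lt_succ_of_le (Finset.le_sup (f := id) hn))
          (le_max_right _ _)
    · have hsplit : ∑ n ∈ F \ Finset.range M, a n
          = (∑ n ∈ F, a n) - ∑ n ∈ F ∩ Finset.range M, a n := by
        rw [eq_sub_iff_add_eq, ← Finset.sdiff_inter_self_left F (Finset.range M)]
        exact Finset.sum_sdiff Finset.inter_subset_left
      have hb : ‖∑ n ∈ F ∩ Finset.range M, a n‖ ≤ ∑ n ∈ Finset.range M, ‖a n‖ := by
        calc ‖∑ n ∈ F ∩ Finset.range M, a n‖ ≤ ∑ n ∈ F ∩ Finset.range M, ‖a n‖ :=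
              norm_sum_le _ _
          _ ≤ ∑ n ∈ Finset.range M, ‖a n‖ :=
              Finset.sum_le_sum_of_subset_of_nonneg Finset.inter_subset_right
                (fun _ _ _ => norm_nonneg _)
      rw [hsplit]
      have := norm_sub_norm_le (∑ n ∈ F, a n) (∑ n ∈ F ∩ Finset.range M, a n)
      have h2 := norm_sub_le (∑ n ∈ F, a n) (∑ n ∈ F ∩ Finset.range M, a n)
      nlinarith [norm_nonneg (∑ n ∈ F, a n)]
  choose p hlt hsub hnorm using step
  set Mf : ℕ → ℕ := fun k => Nat.rec 0 (fun k Mk => (p Mk k).1) k with hMf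
  refine ⟨Mf, fun k => (p (Mf k) k).2, rfl,
    strictMono_nat_of_lt_succ (fun k => hlt _ k), fun k => hsub _ k, fun k => hnorm _ k⟩

lemma mem_right_of_getElem_append {α : Type*} (l1 l2 : List α) (j : ℕ)
    (hj : j < (l1 ++ l2).length) (hl : l1.length ≤ j) : (l1 ++ l2)[j] ∈ l2 := by
  rw [List.getElem_append_right hl]
  exact List.getElem_mem _

lemma uncond_bounded [CompleteSpace E] (a : ℕ → E)
    (h : ∀ σ : Equiv.Perm ℕ, ∃ L : E,
      Tendsto (fun N => ∑ n ∈ Finset.range N, a (σ n)) atTop (nhds L)) :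
    ∃ C : ℝ, ∀ F : Finset ℕ, ‖∑ n ∈ F, a n‖ ≤ C := by
  by_contra hcon
  push_neg at hcon
  obtain ⟨M, G, hM0, hMmono, hGsub, hGnorm⟩ := exists_blocks a hcon
  set L : ℕ → List ℕ := fun k =>
    ((Finset.Ico (M k) (M (k+1))) \ G k).sort (· ≤ ·) ++ (G k).sort (· ≤ ·) with hLdef
  have hmemL : ∀ k n, n ∈ L k ↔ n ∈ Finset.Ico (M k) (M (k+1)) := by
    intro k n
    simp only [hLdef, List.mem_append, Finset.mem_sort, Finset.mem_sdiff]
    constructor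
    · rintro (⟨h1, _⟩ | h1)
      · exact h1
      · exact hGsub k h1
    · intro h1
      by_cases hg : n ∈ G k
      · exact Or.inr hg
      · exact Or.inl ⟨h1, hg⟩
  have hlen1 : ∀ k, (((Finset.Ico (M k) (M (k+1))) \ G k).sort (· ≤ ·)).length
      = (M (k+1) - M k) - (G k).card := by
    intro k
    rw [Finset.length_sort, Finset.card_sdiff_of_subset (hGsub k), Nat.card_Ico]
  have hcardG : ∀ k, (G k).card ≤ M (k+1) - M k := by
    intro k
    calc (G k).card ≤ (Finset.Ico (M k) (M (k+1))).card := Finset.card_le_card (hGsub k)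
      _ = M (k+1) - M k := Nat.card_Ico _ _
  have hlen : ∀ k, (L k).length = M (k+1) - M k := by
    intro k
    rw [hLdef]
    simp only [List.length_append, hlen1, Finset.length_sort]
    have := hcardG k
    omega
  have hnodup : ∀ k, (L k).Nodup := by
    intro k
    refine List.Nodup.append (Finset.sort_nodup _ _) (Finset.sort_nodup _ _) ?_
    intro x hx hx2
    rw [Finset.mem_sort] at hx hx2
    exact (Finset.mem_sdiff.mp hx).2 hx2
  have hex : ∀ n, ∃ k, n < M (k+1) :=
    fun n => ⟨n, lt_of_lt_of_le (Nat.lt_succ_self n) hMmono.le_apply⟩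
  set idx : ℕ → ℕ := fun n => Nat.find (hex n) with hidxdef
  have hidx : ∀ n, M (idx n) ≤ n ∧ n < M (idx n + 1) := by
    intro n
    refine ⟨?_, Nat.find_spec (hex n)⟩
    rcases Nat.eq_zero_or_pos (idx n) with h0 | h0
    · rw [h0, hM0]; exact Nat.zero_le n
    · have := Nat.find_min (hex n) (Nat.sub_lt h0 Nat.one_pos)
      push_neg at this
      have h1 : idx n - 1 + 1 = idx n := Nat.succ_pred_eq_of_pos h0
      rwa [h1] at this
  have hidx_eq : ∀ n k, M k ≤ n → n < M (k+1) → idx n = k := by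
    intro n k h1 h2
    rw [hidxdef]
    rw [Nat.find_eq_iff]
    refine ⟨h2, ?_⟩
    intro j hj
    push_neg
    exact le_trans (hMmono.monotone (Nat.succ_le_of_lt hj)) h1
  have hbound : ∀ n, n - M (idx n) < (L (idx n)).length := by
    intro n
    rw [hlen]
    have := hidx n
    omega
  set f : ℕ → ℕ := fun n => (L (idx n))[n - M (idx n)]'(hbound n) with hfdef
  have hmemf : ∀ n, f n ∈ Finset.Ico (M (idx n)) (M (idx n + 1)) := by
    intro n
    rw [← hmemL]
    exact List.getElem_mem _
  have hidxf : ∀ n, idx (f n) = idx n := by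
    intro n
    have := Finset.mem_Ico.mp (hmemf n)
    exact hidx_eq _ _ this.1 this.2
  have hinj : Function.Injective f := by
    intro n1 n2 he
    have hk : idx n1 = idx n2 := by rw [← hidxf n1, ← hidxf n2, he]
    rw [hfdef] at he
    simp only [hk] at he
    have := ((hnodup (idx n2)).getElem_inj_iff).mp he
    have h1 := hidx n1
    have h2 := hidx n2
    rw [hk] at h1
    omega
  have hsurj : Function.Surjective f := by
    intro v
    have hv : v ∈ L (idx v) := (hmemL _ _).mpr (Finset.mem_Ico.mpr (hidx v))
    obtain ⟨i, hilt, hi⟩ := List.mem_iff_getElem.mp hv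
    refine ⟨M (idx v) + i, ?_⟩
    have hn : M (idx v) + i < M (idx v + 1) := by
      rw [hlen] at hilt
      have := (hidx v).1
      omega
    have hidxn : idx (M (idx v) + i) = idx v :=
      hidx_eq _ _ (Nat.le_add_right _ _) hn
    rw [hfdef]
    simp only [hidxn, Nat.add_sub_cancel_left]
    exact hi
  set σ : Equiv.Perm ℕ := Equiv.ofBijective f ⟨hinj, hsurj⟩ with hσdef
  have hσ : ∀ n, σ n = f n := fun n => rfl
  obtain ⟨Lim, hT⟩ := h σ
  rw [Metric.tendsto_atTop] at hT
  obtain ⟨N₀, hN₀⟩ := hT (1/2) (by norm_num)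
  obtain ⟨k, hkN⟩ : ∃ k : ℕ, N₀ ≤ k := ⟨N₀, le_refl _⟩
  have hcard := hcardG k
  have hkMle : k ≤ M k := hMmono.le_apply
  have hMk2 : M k < M (k+1) := hMmono (Nat.lt_succ_self k)
  have hsum : ∑ n ∈ Finset.Ico (M (k+1) - (G k).card) (M (k+1)), a (f n)
      = ∑ n ∈ G k, a n := by
    have himg : ∀ n ∈ Finset.Ico (M (k+1) - (G k).card) (M (k+1)), f n ∈ G k := by
      intro n hn
      rw [Finset.mem_Ico] at hn
      have hidxn : idx n = k := hidx_eq _ _ (by omega) hn.2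
      have hmem : f n ∈ (G (idx n)).sort (· ≤ ·) := by
        apply mem_right_of_getElem_append
        rw [hlen1, hidxn]
        omega
      rw [Finset.mem_sort, hidxn] at hmem
      exact hmem
    have hIcard : (Finset.Ico (M (k+1) - (G k).card) (M (k+1))).card = (G k).card := by
      rw [Nat.card_Ico]
      omega
    have himage : (Finset.Ico (M (k+1) - (G k).card) (M (k+1))).image f = G k := by
      apply Finset.eq_of_subset_of_card_le
      · intro v hv
        obtain ⟨n, hn, rfl⟩ := Finset.mem_image.mp hv
        exact himg n hn
      · rw [Finset.card_image_of_injective _ hinj, hIcard]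
    conv_rhs => rw [← himage]
    exact (Finset.sum_image (fun x _ y _ hxy => hinj hxy)).symm
  have hSdiff : (∑ n ∈ Finset.range (M (k+1)), a (σ n))
      - ∑ n ∈ Finset.range (M (k+1) - (G k).card), a (σ n) = ∑ n ∈ G k, a n := by
    rw [← hsum]
    rw [Finset.range_eq_Ico, Finset.range_eq_Ico,
      ← Finset.sum_Ico_consecutive _ (Nat.zero_le (M (k+1) - (G k).card))
        (Nat.sub_le (M (k+1)) ((G k).card))]
    simp only [add_sub_cancel_left]
    exact Finset.sum_congr rfl (fun n _ => by rw [hσ])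
  have hsN : N₀ ≤ M (k+1) - (G k).card := by omega
  have htN : N₀ ≤ M (k+1) := by omega
  have h1 := hN₀ _ hsN
  have h2 := hN₀ _ htN
  have hd : ‖∑ n ∈ G k, a n‖ < 1 := by
    rw [← hSdiff]
    calc ‖(∑ n ∈ Finset.range (M (k+1)), a (σ n))
          - ∑ n ∈ Finset.range (M (k+1) - (G k).card), a (σ n)‖
        ≤ dist (∑ n ∈ Finset.range (M (k+1)), a (σ n)) Lim
          + dist (∑ n ∈ Finset.range (M (k+1) - (G k).card), a (σ n)) Lim := by
          rw [dist_eq_norm, dist_eq_norm]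
          have := norm_sub_le ((∑ n ∈ Finset.range (M (k+1)), a (σ n)) - Lim)
            ((∑ n ∈ Finset.range (M (k+1) - (G k).card), a (σ n)) - Lim)
          simpa using this
      _ < 1/2 + 1/2 := add_lt_add h2 h1
      _ = 1 := by norm_num
  have hgk := hGnorm k
  have hk0 : (0:ℝ) ≤ (k:ℝ) := Nat.cast_nonneg k
  linarith

lemma sum_norm_sq_le_signed (a : ℕ → H) (F : Finset ℕ) :
    ∃ S : Finset ℕ, S ⊆ F ∧
      ∑ n ∈ F, ‖a n‖ ^ 2 ≤ ‖(∑ n ∈ S, a n) - ∑ n ∈ F \ S, a n‖ ^ 2 := by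
  classical
  induction F using Finset.induction_on with
  | empty => exact ⟨∅, Finset.Subset.refl _, by simp⟩
  | @insert k F hkF ih =>
    obtain ⟨S, hS, hle⟩ := ih
    have hkS : k ∉ S := fun hx => hkF (hS hx)
    set y := (∑ n ∈ S, a n) - ∑ n ∈ F \ S, a n with hy
    have hpar : ‖y + a k‖ ^ 2 + ‖y - a k‖ ^ 2 = 2 * (‖y‖ ^ 2 + ‖a k‖ ^ 2) := by
      rw [pow_two, pow_two, pow_two, pow_two]
      simpa only [pow_two] using parallelogram_law_with_norm ℂ y (a k)
    have hsum_ins : ∑ n ∈ insert k F, ‖a n‖ ^ 2 = ‖a k‖ ^ 2 + ∑ n ∈ F, ‖a n‖ ^ 2 :=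
      Finset.sum_insert hkF
    by_cases hc : ‖y - a k‖ ^ 2 ≤ ‖y + a k‖ ^ 2
    · refine ⟨insert k S, Finset.insert_subset_insert k hS, ?_⟩
      have hd : insert k F \ insert k S = F \ S := by
        ext x
        simp only [Finset.mem_sdiff, Finset.mem_insert, not_or]
        constructor
        · rintro ⟨hx1 | hx1, hx2, hx3⟩
          · exact absurd hx1 hx2
          · exact ⟨hx1, hx3⟩
        · rintro ⟨hx1, hx2⟩
          exact ⟨Or.inr hx1, fun he => hkF (he ▸ hx1), hx2⟩
      have hsum_S : ∑ n ∈ insert k S, a n = a k + ∑ n ∈ S, a n := Finset.sum_insert hkS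
      rw [hd, hsum_ins, hsum_S]
      have he : a k + (∑ n ∈ S, a n) - ∑ n ∈ F \ S, a n = y + a k := by
        rw [hy]; abel
      rw [he]
      nlinarith [hle, hpar, hc]
    · refine ⟨S, le_trans hS (Finset.subset_insert k F), ?_⟩
      push_neg at hc
      have hd : insert k F \ S = insert k (F \ S) := by
        ext x
        simp only [Finset.mem_sdiff, Finset.mem_insert]
        constructor
        · rintro ⟨hx1 | hx1, hx2⟩
          · exact Or.inl hx1
          · exact Or.inr ⟨hx1, hx2⟩
        · rintro (hx1 | ⟨hx1, hx2⟩)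
          · exact ⟨Or.inl hx1, hx1 ▸ hkS⟩
          · exact ⟨Or.inr hx1, hx2⟩
      have hkFS : k ∉ F \ S := fun hx => hkF (Finset.mem_sdiff.mp hx).1
      rw [hd, hsum_ins, Finset.sum_insert hkFS]
      have he : (∑ n ∈ S, a n) - (a k + ∑ n ∈ F \ S, a n) = y - a k := by
        rw [hy]; abel
      rw [he]
      nlinarith [hle, hpar, hc]

theorem stmt8 (φ ψ : ℕ → H) (m : ℕ → ℂ)
    (h : ∀ f : H, UncondConv (fun n => (m n * ⟪f, ψ n⟫) • φ n)) :
    Bessel (fun n => (m n * (‖φ n‖ : ℂ)) • ψ n) := by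
  classical
  set ξ : ℕ → H := fun n => (m n * (‖φ n‖ : ℂ)) • ψ n with hξ
  have key : ∀ f : H, ∃ C : ℝ, 0 ≤ C ∧ ∀ F : Finset ℕ,
      ∑ n ∈ F, ‖(⟪ξ n, f⟫ : ℂ)‖ ^ 2 ≤ C := by
    intro f
    obtain ⟨C0, hC0⟩ := uncond_bounded (fun n => (m n * ⟪f, ψ n⟫) • φ n) (h f)
    have hC00 : 0 ≤ C0 := by simpa using hC0 ∅
    refine ⟨4 * C0 ^ 2, by positivity, fun F => ?_⟩
    obtain ⟨S, hS, hle⟩ := sum_norm_sq_le_signed (fun n => (m n * ⟪f, ψ n⟫) • φ n) F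
    have heq : ∀ n, ‖(⟪ξ n, f⟫ : ℂ)‖ = ‖(m n * ⟪f, ψ n⟫) • φ n‖ := by
      intro n
      rw [norm_inner_symm, hξ]
      simp only [inner_smul_right, norm_smul, norm_mul, Complex.norm_real, norm_norm]
      ring
    calc ∑ n ∈ F, ‖(⟪ξ n, f⟫ : ℂ)‖ ^ 2
        = ∑ n ∈ F, ‖(m n * ⟪f, ψ n⟫) • φ n‖ ^ 2 :=
          Finset.sum_congr rfl (fun n _ => by rw [heq])
      _ ≤ ‖(∑ n ∈ S, (m n * ⟪f, ψ n⟫) • φ n)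
            - ∑ n ∈ F \ S, (m n * ⟪f, ψ n⟫) • φ n‖ ^ 2 := hle
      _ ≤ 4 * C0 ^ 2 := by
          have h1 := hC0 S
          have h2 := hC0 (F \ S)
          have h3 := norm_sub_le (∑ n ∈ S, (m n * ⟪f, ψ n⟫) • φ n)
            (∑ n ∈ F \ S, (m n * ⟪f, ψ n⟫) • φ n)
          have h4 : (0:ℝ) ≤ ‖(∑ n ∈ S, (m n * ⟪f, ψ n⟫) • φ n)
            - ∑ n ∈ F \ S, (m n * ⟪f, ψ n⟫) • φ n‖ := norm_nonneg _
          nlinarith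
  have hpt : ∀ f : H, ∃ C : ℝ,
      ∀ p : {p : Finset ℕ × (ℕ → ℂ) // ∑ n ∈ p.1, ‖p.2 n‖ ^ 2 ≤ 1},
        ‖(∑ n ∈ p.val.1, p.val.2 n • innerSL ℂ (ξ n) : H →L[ℂ] ℂ) f‖ ≤ C := by
    intro f
    obtain ⟨C, hC0, hC⟩ := key f
    refine ⟨Real.sqrt C, fun p => ?_⟩
    have hgapp : (∑ n ∈ p.val.1, p.val.2 n • innerSL ℂ (ξ n) : H →L[ℂ] ℂ) f
        = ∑ n ∈ p.val.1, p.val.2 n * ⟪ξ n, f⟫ := by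
      simp [ContinuousLinearMap.sum_apply, ContinuousLinearMap.smul_apply, smul_eq_mul]
    rw [hgapp]
    have hstep : ∑ n ∈ p.val.1, ‖p.val.2 n‖ * ‖(⟪ξ n, f⟫ : ℂ)‖ ≤ Real.sqrt C := by
      have hcs := Finset.sum_mul_sq_le_sq_mul_sq p.val.1 (fun n => ‖p.val.2 n‖)
        (fun n => ‖(⟪ξ n, f⟫ : ℂ)‖)
      have h1 : ∑ n ∈ p.val.1, ‖(⟪ξ n, f⟫ : ℂ)‖ ^ 2 ≤ C := hC p.val.1
      have hvnn : (0:ℝ) ≤ ∑ n ∈ p.val.1, ‖(⟪ξ n, f⟫ : ℂ)‖ ^ 2 :=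
        Finset.sum_nonneg (fun n _ => by positivity)
      have h2 : (∑ n ∈ p.val.1, ‖p.val.2 n‖ * ‖(⟪ξ n, f⟫ : ℂ)‖) ^ 2 ≤ C := by
        calc (∑ n ∈ p.val.1, ‖p.val.2 n‖ * ‖(⟪ξ n, f⟫ : ℂ)‖) ^ 2
            ≤ (∑ n ∈ p.val.1, ‖p.val.2 n‖ ^ 2) * ∑ n ∈ p.val.1, ‖(⟪ξ n, f⟫ : ℂ)‖ ^ 2 := hcs
          _ ≤ 1 * C := mul_le_mul p.2 h1 hvnn zero_le_one
          _ = C := one_mul C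
      have hnn : (0:ℝ) ≤ ∑ n ∈ p.val.1, ‖p.val.2 n‖ * ‖(⟪ξ n, f⟫ : ℂ)‖ :=
        Finset.sum_nonneg (fun n _ => by positivity)
      nlinarith [Real.sq_sqrt hC0, Real.sqrt_nonneg C]
    calc ‖∑ n ∈ p.val.1, p.val.2 n * ⟪ξ n, f⟫‖
        ≤ ∑ n ∈ p.val.1, ‖p.val.2 n * ⟪ξ n, f⟫‖ := norm_sum_le _ _
      _ = ∑ n ∈ p.val.1, ‖p.val.2 n‖ * ‖(⟪ξ n, f⟫ : ℂ)‖ := by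
          exact Finset.sum_congr rfl (fun n _ => norm_mul _ _)
      _ ≤ Real.sqrt C := hstep
  obtain ⟨C', hC'⟩ := banach_steinhaus
    (g := fun p : {p : Finset ℕ × (ℕ → ℂ) // ∑ n ∈ p.1, ‖p.2 n‖ ^ 2 ≤ 1} =>
      (∑ n ∈ p.val.1, p.val.2 n • innerSL ℂ (ξ n) : H →L[ℂ] ℂ)) hpt
  have hC'0 : 0 ≤ C' := le_trans (norm_nonneg _) (hC' ⟨(∅, fun _ => 0), by simp⟩)
  refine ⟨C' ^ 2, fun f F => ?_⟩
  have hsymm : ∑ n ∈ F, ‖(⟪f, ξ n⟫ : ℂ)‖ ^ 2 = ∑ n ∈ F, ‖(⟪ξ n, f⟫ : ℂ)‖ ^ 2 :=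
    Finset.sum_congr rfl (fun n _ => by rw [norm_inner_symm])
  rw [hsymm]
  set s := ∑ n ∈ F, ‖(⟪ξ n, f⟫ : ℂ)‖ ^ 2 with hs
  have hs0 : 0 ≤ s := Finset.sum_nonneg (fun n _ => by positivity)
  rcases eq_or_lt_of_le hs0 with hz | hpos
  · rw [← hz]
    positivity
  · have hsqrt : 0 < Real.sqrt s := Real.sqrt_pos.mpr hpos
    set c : ℕ → ℂ := fun n => (starRingEnd ℂ) ⟪ξ n, f⟫ / ((Real.sqrt s : ℝ) : ℂ) with hc
    have hcnorm : ∀ n, ‖c n‖ ^ 2 = ‖(⟪ξ n, f⟫ : ℂ)‖ ^ 2 / s := by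
      intro n
      rw [hc]
      simp only [norm_div, RCLike.norm_conj, Complex.norm_real, Real.norm_eq_abs,
        abs_of_nonneg (Real.sqrt_nonneg s), div_pow, Real.sq_sqrt hs0]
    have hcsum : ∑ n ∈ F, ‖c n‖ ^ 2 = 1 := by
      rw [Finset.sum_congr rfl (fun n _ => hcnorm n), ← Finset.sum_div, ← hs,
        div_self (ne_of_gt hpos)]
    set p : {p : Finset ℕ × (ℕ → ℂ) // ∑ n ∈ p.1, ‖p.2 n‖ ^ 2 ≤ 1} :=
      ⟨(F, c), le_of_eq hcsum⟩ with hp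
    have happ : (∑ n ∈ p.val.1, p.val.2 n • innerSL ℂ (ξ n) : H →L[ℂ] ℂ) f
        = (((s / Real.sqrt s : ℝ)) : ℂ) := by
      simp only [ContinuousLinearMap.sum_apply, ContinuousLinearMap.smul_apply,
        innerSL_apply_apply, smul_eq_mul]
      have hterm : ∀ n, c n * ⟪ξ n, f⟫ = ((‖(⟪ξ n, f⟫ : ℂ)‖ ^ 2 / Real.sqrt s : ℝ) : ℂ) := by
        intro n
        rw [hc]
        simp only [div_mul_eq_mul_div]
        rw [mul_comm ((starRingEnd ℂ) ⟪ξ n, f⟫) _, Complex.mul_conj]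
        rw [Complex.normSq_eq_norm_sq]
        push_cast
        rfl
      calc ∑ n ∈ p.val.1, p.val.2 n * ⟪ξ n, f⟫
          = ∑ n ∈ F, ((‖(⟪ξ n, f⟫ : ℂ)‖ ^ 2 / Real.sqrt s : ℝ) : ℂ) :=
            Finset.sum_congr rfl (fun n _ => hterm n)
        _ = (((∑ n ∈ F, ‖(⟪ξ n, f⟫ : ℂ)‖ ^ 2) / Real.sqrt s : ℝ) : ℂ) := by
            push_cast
            rw [Finset.sum_div]
        _ = (((s / Real.sqrt s : ℝ)) : ℂ) := by rw [← hs]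
    have hb : ‖(∑ n ∈ p.val.1, p.val.2 n • innerSL ℂ (ξ n) : H →L[ℂ] ℂ) f‖ ≤ C' * ‖f‖ :=
      le_trans (ContinuousLinearMap.le_opNorm _ f)
        (mul_le_mul_of_nonneg_right (hC' p) (norm_nonneg f))
    rw [happ] at hb
    have hnrm : ‖(((s / Real.sqrt s : ℝ)) : ℂ)‖ = s / Real.sqrt s := by
      rw [Complex.norm_real, Real.norm_eq_abs, abs_of_nonneg (div_nonneg hs0 (le_of_lt hsqrt))]
    rw [hnrm] at hb
    have hdiv : s / Real.sqrt s = Real.sqrt s := by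
      rw [eq_comm, eq_div_iff (ne_of_gt hsqrt), Real.mul_self_sqrt hs0]
    rw [hdiv] at hb
    have := Real.sq_sqrt hs0
    nlinarith [norm_nonneg f, Real.sqrt_nonneg s]
end

section
/- If M_{m,Φ,Ψ} is unconditionally convergent on H and both Φ and Ψ are norm-bounded below, then m ∈ ℓ∞. -/
open scoped BigOperators ComplexConjugate
open Filter Finset

variable {H : Type*} [NormedAddCommGroup H] [InnerProductSpace ℂ H] [CompleteSpace H]

local notation "⟪" x ", " y "⟫" => @inner ℂ _ _ x y

theorem stmt10 (φ ψ : ℕ → H) (m : ℕ → ℂ)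
    (h : ∀ f : H, UncondConv (fun n => (m n * ⟪f, ψ n⟫) • φ n))
    (hφ : ∃ a : ℝ, 0 < a ∧ ∀ n, a ≤ ‖φ n‖)
    (hψ : ∃ a : ℝ, 0 < a ∧ ∀ n, a ≤ ‖ψ n‖) :
    ∃ C : ℝ, ∀ n, ‖m n‖ ≤ C := by
  obtain ⟨a, ha, hφa⟩ := hφ
  obtain ⟨b, hb, hψb⟩ := hψ
  -- define partial sum operators as conjugate-linear continuous maps
  set g : ℕ → H →SL[starRingEnd ℂ] H := fun N =>
    LinearMap.mkContinuousOfExistsBound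
      { toFun := fun f => ∑ n ∈ Finset.range N, (m n * ⟪f, ψ n⟫) • φ n
        map_add' := by
          intro x y
          simp [inner_add_left, mul_add, add_smul, Finset.sum_add_distrib]
        map_smul' := by
          intro c f
          simp only [inner_smul_left, Finset.smul_sum, smul_smul]
          exact Finset.sum_congr rfl fun n _ => by ring_nf }
      ⟨∑ n ∈ Finset.range N, ‖m n‖ * ‖ψ n‖ * ‖φ n‖, by
        intro f
        calc ‖∑ n ∈ Finset.range N, (m n * ⟪f, ψ n⟫) • φ n‖
            ≤ ∑ n ∈ Finset.range N, ‖(m n * ⟪f, ψ n⟫) • φ n‖ := norm_sum_le _ _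
          _ ≤ ∑ n ∈ Finset.range N, (‖m n‖ * ‖ψ n‖ * ‖φ n‖) * ‖f‖ := by
              refine Finset.sum_le_sum fun n _ => ?_
              rw [norm_smul, norm_mul]
              have := norm_inner_le_norm (𝕜 := ℂ) f (ψ n)
              calc ‖m n‖ * ‖⟪f, ψ n⟫‖ * ‖φ n‖
                  ≤ ‖m n‖ * (‖f‖ * ‖ψ n‖) * ‖φ n‖ := by
                    gcongr
                _ = ‖m n‖ * ‖ψ n‖ * ‖φ n‖ * ‖f‖ := by ring
          _ = (∑ n ∈ Finset.range N, ‖m n‖ * ‖ψ n‖ * ‖φ n‖) * ‖f‖ := by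
              rw [Finset.sum_mul]⟩ with hg
  have hgapp : ∀ N f, g N f = ∑ n ∈ Finset.range N, (m n * ⟪f, ψ n⟫) • φ n := fun N f => rfl
  -- pointwise boundedness
  have hpt : ∀ f : H, ∃ C, ∀ N, ‖g N f‖ ≤ C := by
    intro f
    obtain ⟨L, hL⟩ := h f (Equiv.refl ℕ)
    simp only [Equiv.refl_apply] at hL
    have : Tendsto (fun N => ‖g N f‖) atTop (nhds ‖L‖) := by
      simpa [hgapp] using hL.norm
    obtain ⟨C, hC⟩ := this.bddAbove_range
    exact ⟨C, fun N => hC ⟨N, rfl⟩⟩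
  obtain ⟨C, hC⟩ := banach_steinhaus hpt
  have hC0 : 0 ≤ C := le_trans (norm_nonneg _) (hC 0)
  refine ⟨2 * C / (b * a), fun n => ?_⟩
  have hterm : (m n * ⟪(ψ n : H), ψ n⟫) • φ n = g (n + 1) (ψ n) - g n (ψ n) := by
    rw [hgapp, hgapp, Finset.sum_range_succ]
    abel
  have h1 : ‖(m n * ⟪(ψ n : H), ψ n⟫) • φ n‖ ≤ 2 * C * ‖ψ n‖ := by
    rw [hterm]
    calc ‖g (n + 1) (ψ n) - g n (ψ n)‖ ≤ ‖g (n + 1) (ψ n)‖ + ‖g n (ψ n)‖ := norm_sub_le _ _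
      _ ≤ C * ‖ψ n‖ + C * ‖ψ n‖ := by
          gcongr <;> exact ((g _).le_of_opNorm_le (hC _) _)
      _ = 2 * C * ‖ψ n‖ := by ring
  have h2 : ‖(m n * ⟪(ψ n : H), ψ n⟫) • φ n‖ = ‖m n‖ * ‖ψ n‖ ^ 2 * ‖φ n‖ := by
    rw [norm_smul, norm_mul, inner_self_eq_norm_sq_to_K, norm_pow]
    norm_num
  have hψn : b ≤ ‖ψ n‖ := hψb n
  have hφn : a ≤ ‖φ n‖ := hφa n
  have hψpos : 0 < ‖ψ n‖ := lt_of_lt_of_le hb hψn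
  have this1 : ‖m n‖ * ‖ψ n‖ ^ 2 * ‖φ n‖ ≤ 2 * C * ‖ψ n‖ := h2 ▸ h1
  have step1 : ‖m n‖ * ‖ψ n‖ * ‖φ n‖ ≤ 2 * C := by
    have h3 : (‖m n‖ * ‖ψ n‖ * ‖φ n‖) * ‖ψ n‖ ≤ (2 * C) * ‖ψ n‖ := by nlinarith [this1]
    exact le_of_mul_le_mul_right h3 hψpos
  rw [le_div_iff₀ (by positivity)]
  nlinarith [step1, hψn, hφn, norm_nonneg (m n), mul_nonneg (norm_nonneg (m n)) (sub_nonneg.2 hψn), mul_nonneg (norm_nonneg (m n)) (sub_nonneg.2 hφn), hb.le, ha.le, norm_nonneg (ψ n), norm_nonneg (φ n)]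
end

section
/- Let Φ be a norm-bounded-below Bessel sequence for H. Then M_{m,Φ,Ψ} is unconditionally convergent on H if and only if (mₙ ψₙ) is a Bessel sequence for H. -/
open scoped BigOperators ComplexConjugate
open Filter Finset

variable {H : Type*} [NormedAddCommGroup H] [InnerProductSpace ℂ H] [CompleteSpace H]

local notation "⟪" x ", " y "⟫" => @inner ℂ _ _ x y

set_option linter.unusedSectionVars false

/-- Cauchy–Schwarz for finite sums, square-root form. -/
lemma aux_cs_sqrt (F : Finset ℕ) (a b : ℕ → ℝ) (ha : ∀ n, 0 ≤ a n) (hb : ∀ n, 0 ≤ b n) :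
    ∑ n ∈ F, a n * b n ≤
      Real.sqrt (∑ n ∈ F, a n ^ 2) * Real.sqrt (∑ n ∈ F, b n ^ 2) := by
  have h := Finset.sum_mul_sq_le_sq_mul_sq F a b
  have h0 : 0 ≤ ∑ n ∈ F, a n * b n :=
    Finset.sum_nonneg fun n _ => mul_nonneg (ha n) (hb n)
  calc ∑ n ∈ F, a n * b n = Real.sqrt ((∑ n ∈ F, a n * b n) ^ 2) := (Real.sqrt_sq h0).symm
    _ ≤ Real.sqrt ((∑ n ∈ F, a n ^ 2) * ∑ n ∈ F, b n ^ 2) := Real.sqrt_le_sqrt h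
    _ = _ := Real.sqrt_mul (Finset.sum_nonneg fun n _ => sq_nonneg _) _

/-- Synthesis bound for a Bessel sequence. -/
lemma aux_synth {φ : ℕ → H} {B : ℝ} (hB0 : 0 ≤ B)
    (hφ : ∀ h : H, ∀ F : Finset ℕ, ∑ n ∈ F, ‖(inner ℂ h (φ n) : ℂ)‖ ^ 2 ≤ B * ‖h‖ ^ 2)
    (c : ℕ → ℂ) (F : Finset ℕ) :
    ‖∑ n ∈ F, c n • φ n‖ ^ 2 ≤ B * ∑ n ∈ F, ‖c n‖ ^ 2 := by
  set s : H := ∑ n ∈ F, c n • φ n with hs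
  have hsum0 : (0:ℝ) ≤ ∑ n ∈ F, ‖c n‖ ^ 2 := Finset.sum_nonneg fun n _ => sq_nonneg _
  have h2 : (inner ℂ s s : ℂ) = ∑ n ∈ F, c n * inner ℂ s (φ n) := by
    rw [hs, inner_sum]
    exact Finset.sum_congr rfl fun n _ => inner_smul_right _ _ _
  have h3 : ‖s‖ ^ 2 ≤ ∑ n ∈ F, ‖c n‖ * ‖(inner ℂ s (φ n) : ℂ)‖ := by
    calc ‖s‖ ^ 2 = RCLike.re (inner ℂ s s : ℂ) := (inner_self_eq_norm_sq s).symm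
      _ ≤ ‖(inner ℂ s s : ℂ)‖ := RCLike.re_le_norm _
      _ = ‖∑ n ∈ F, c n * inner ℂ s (φ n)‖ := by rw [h2]
      _ ≤ ∑ n ∈ F, ‖c n * inner ℂ s (φ n)‖ := norm_sum_le _ _
      _ = ∑ n ∈ F, ‖c n‖ * ‖(inner ℂ s (φ n) : ℂ)‖ :=
          Finset.sum_congr rfl fun n _ => norm_mul _ _
  have h4 : ‖s‖ ^ 2 ≤ Real.sqrt (∑ n ∈ F, ‖c n‖ ^ 2) *
      Real.sqrt (∑ n ∈ F, ‖(inner ℂ s (φ n) : ℂ)‖ ^ 2) :=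
    h3.trans (aux_cs_sqrt F _ _ (fun n => norm_nonneg _) (fun n => norm_nonneg _))
  have h5 : Real.sqrt (∑ n ∈ F, ‖(inner ℂ s (φ n) : ℂ)‖ ^ 2) ≤ Real.sqrt B * ‖s‖ := by
    calc Real.sqrt (∑ n ∈ F, ‖(inner ℂ s (φ n) : ℂ)‖ ^ 2) ≤ Real.sqrt (B * ‖s‖ ^ 2) :=
          Real.sqrt_le_sqrt (hφ s F)
      _ = Real.sqrt B * Real.sqrt (‖s‖ ^ 2) := Real.sqrt_mul hB0 _
      _ = Real.sqrt B * ‖s‖ := by rw [Real.sqrt_sq (norm_nonneg _)]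
  by_cases hz : ‖s‖ = 0
  · rw [hz]
    simpa using mul_nonneg hB0 hsum0
  · have hpos : 0 < ‖s‖ := lt_of_le_of_ne (norm_nonneg _) (Ne.symm hz)
    have hmul : Real.sqrt (∑ n ∈ F, ‖c n‖ ^ 2) *
          Real.sqrt (∑ n ∈ F, ‖(inner ℂ s (φ n) : ℂ)‖ ^ 2)
        ≤ Real.sqrt (∑ n ∈ F, ‖c n‖ ^ 2) * (Real.sqrt B * ‖s‖) :=
      mul_le_mul_of_nonneg_left h5 (Real.sqrt_nonneg _)
    have h6 : ‖s‖ * ‖s‖ ≤ (Real.sqrt (∑ n ∈ F, ‖c n‖ ^ 2) * Real.sqrt B) * ‖s‖ := by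
      calc ‖s‖ * ‖s‖ = ‖s‖ ^ 2 := (sq ‖s‖).symm
        _ ≤ Real.sqrt (∑ n ∈ F, ‖c n‖ ^ 2) * (Real.sqrt B * ‖s‖) := h4.trans hmul
        _ = (Real.sqrt (∑ n ∈ F, ‖c n‖ ^ 2) * Real.sqrt B) * ‖s‖ := by ring
    have h7 : ‖s‖ ≤ Real.sqrt (∑ n ∈ F, ‖c n‖ ^ 2) * Real.sqrt B :=
      le_of_mul_le_mul_right h6 hpos
    calc ‖s‖ ^ 2 ≤ (Real.sqrt (∑ n ∈ F, ‖c n‖ ^ 2) * Real.sqrt B) ^ 2 :=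
          pow_le_pow_left₀ (norm_nonneg _) h7 2
      _ = (∑ n ∈ F, ‖c n‖ ^ 2) * B := by
          rw [mul_pow, Real.sq_sqrt hsum0, Real.sq_sqrt hB0]
      _ = B * ∑ n ∈ F, ‖c n‖ ^ 2 := by ring

/-- Sign choice lemma: some signed sum dominates the sum of squared norms. -/
lemma aux_signs (x : ℕ → H) (G : Finset ℕ) :
    ∃ P ⊆ G, ∑ n ∈ G, ‖x n‖ ^ 2 ≤ ‖(∑ n ∈ P, x n) - ∑ n ∈ G \ P, x n‖ ^ 2 := by
  induction G using Finset.induction_on with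
  | empty => exact ⟨∅, by simp⟩
  | @insert a G ha ih =>
    obtain ⟨P, hPG, hP⟩ := ih
    have haP : a ∉ P := fun h => ha (hPG h)
    set u := ∑ n ∈ P, x n with hu
    set v := ∑ n ∈ G \ P, x n with hv
    have hpar := parallelogram_law_with_norm ℂ (x a) (u - v)
    have hins : ∑ n ∈ insert a G, ‖x n‖ ^ 2 = ‖x a‖ ^ 2 + ∑ n ∈ G, ‖x n‖ ^ 2 :=
      Finset.sum_insert ha
    by_cases hcmp : ‖x a - (u - v)‖ ≤ ‖x a + (u - v)‖
    · refine ⟨insert a P, Finset.insert_subset_insert a hPG, ?_⟩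
      have hsd : insert a G \ insert a P = G \ P := by
        ext b
        simp only [Finset.mem_sdiff, Finset.mem_insert, not_or]
        constructor
        · rintro ⟨hb1 | hb1, hb2, hb3⟩
          · exact absurd hb1 hb2
          · exact ⟨hb1, hb3⟩
        · rintro ⟨hb1, hb2⟩
          exact ⟨Or.inr hb1, fun e => ha (e ▸ hb1), hb2⟩
      rw [hins, hsd, Finset.sum_insert haP, ← hu, ← hv]
      have he : x a + u - v = x a + (u - v) := by abel
      rw [he]
      have h1 : ‖x a - (u - v)‖ * ‖x a - (u - v)‖ ≤ ‖x a + (u - v)‖ * ‖x a + (u - v)‖ :=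
        mul_self_le_mul_self (norm_nonneg _) hcmp
      have h3 : ‖x a‖ ^ 2 + ‖u - v‖ ^ 2 ≤ ‖x a + (u - v)‖ ^ 2 := by
        have h2 : ‖x a‖ * ‖x a‖ + ‖u - v‖ * ‖u - v‖ ≤ ‖x a + (u - v)‖ * ‖x a + (u - v)‖ := by
          linarith
        simpa [sq] using h2
      linarith [hP]
    · refine ⟨P, hPG.trans (Finset.subset_insert a G), ?_⟩
      have hsd : insert a G \ P = insert a (G \ P) := Finset.insert_sdiff_of_notMem _ haP
      have haGP : a ∉ G \ P := fun h => ha (Finset.mem_sdiff.1 h).1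
      rw [hins, hsd, Finset.sum_insert haGP, ← hu, ← hv]
      have he : u - (x a + v) = -(x a - (u - v)) := by abel
      rw [he, norm_neg]
      push_neg at hcmp
      have h1 : ‖x a + (u - v)‖ * ‖x a + (u - v)‖ ≤ ‖x a - (u - v)‖ * ‖x a - (u - v)‖ :=
        mul_self_le_mul_self (norm_nonneg _) hcmp.le
      have h3 : ‖x a‖ ^ 2 + ‖u - v‖ ^ 2 ≤ ‖x a - (u - v)‖ ^ 2 := by
        have h2 : ‖x a‖ * ‖x a‖ + ‖u - v‖ * ‖u - v‖ ≤ ‖x a - (u - v)‖ * ‖x a - (u - v)‖ := by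
          linarith
        simpa [sq] using h2
      linarith [hP]

/-- Finite subset sums of a summable family are uniformly bounded. -/
lemma aux_bdd_of_summable (x : ℕ → H) (hx : Summable x) :
    ∃ C : ℝ, 0 ≤ C ∧ ∀ G : Finset ℕ, ‖∑ n ∈ G, x n‖ ≤ C := by
  obtain ⟨s, hs⟩ := hx.vanishing (Metric.ball_mem_nhds (0 : H) one_pos)
  refine ⟨(∑ n ∈ s, ‖x n‖) + 1, by positivity, fun G => ?_⟩
  have hsplit : ∑ n ∈ G, x n = ∑ n ∈ G ∩ s, x n + ∑ n ∈ G \ s, x n :=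
    (Finset.sum_inter_add_sum_sdiff G s x).symm
  have h1 : ‖∑ n ∈ G ∩ s, x n‖ ≤ ∑ n ∈ s, ‖x n‖ :=
    (norm_sum_le _ _).trans (Finset.sum_le_sum_of_subset_of_nonneg
      (Finset.inter_subset_right) (fun n _ _ => norm_nonneg _))
  have h2 : ‖∑ n ∈ G \ s, x n‖ < 1 := by
    have := hs (G \ s) Finset.sdiff_disjoint
    simpa [Metric.mem_ball, dist_zero_right] using this
  rw [hsplit]
  calc ‖∑ n ∈ G ∩ s, x n + ∑ n ∈ G \ s, x n‖
      ≤ ‖∑ n ∈ G ∩ s, x n‖ + ‖∑ n ∈ G \ s, x n‖ := norm_add_le _ _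
    _ ≤ (∑ n ∈ s, ‖x n‖) + 1 := by linarith

set_option maxHeartbeats 1000000 in
/-- Unconditional convergence implies summability. -/
lemma aux_summable_of_uncond (x : ℕ → H) (h : UncondConv x) : Summable x := by
  rw [summable_iff_vanishing]
  by_contra hc
  push_neg at hc
  obtain ⟨e, he, hfail⟩ := hc
  obtain ⟨ε, hε, hball⟩ := Metric.mem_nhds_iff.1 he
  have claim : ∀ N : ℕ, ∃ t : Finset ℕ, (∀ i ∈ t, N ≤ i) ∧ ε ≤ ‖∑ i ∈ t, x i‖ := by
    intro N
    obtain ⟨t, ht1, ht2⟩ := hfail (Finset.range N)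
    refine ⟨t, fun i hi => ?_, ?_⟩
    · by_contra hlt
      push_neg at hlt
      exact (Finset.disjoint_left.1 ht1) hi (Finset.mem_range.2 hlt)
    · by_contra hlt
      push_neg at hlt
      exact ht2 (hball (by simpa [Metric.mem_ball, dist_zero_right] using hlt))
  choose T hT1 hT2 using claim
  -- Recursively defined block boundaries.
  set Nseq : ℕ → ℕ := fun k => Nat.rec 0 (fun _ p => max (p + 1) ((T p).sup id + 1)) k
    with hNseq
  have hN0 : Nseq 0 = 0 := rfl
  have hNsucc : ∀ k, Nseq (k + 1) = max (Nseq k + 1) ((T (Nseq k)).sup id + 1) := fun k => rfl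
  have hlt : ∀ k, Nseq k < Nseq (k + 1) := fun k => by
    rw [hNsucc]; exact lt_of_lt_of_le (Nat.lt_succ_self _) (le_max_left _ _)
  have hSM : StrictMono Nseq := strictMono_nat_of_lt_succ hlt
  have hk_le : ∀ k, k ≤ Nseq k := fun k => by
    induction k with
    | zero => simp [hN0]
    | succ n ihn => exact Nat.succ_le_of_lt (lt_of_le_of_lt ihn (hlt n))
  have hblock : ∀ k, ∀ i ∈ T (Nseq k), Nseq k ≤ i ∧ i < Nseq (k + 1) := by
    intro k i hi
    refine ⟨hT1 _ _ hi, ?_⟩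
    rw [hNsucc]
    exact lt_of_le_of_lt (Finset.le_sup (f := id) hi)
      (lt_of_lt_of_le (Nat.lt_succ_self _) (le_max_right _ _))
  have hTsub : ∀ k, T (Nseq k) ⊆ Finset.Ico (Nseq k) (Nseq (k + 1)) := fun k i hi =>
    Finset.mem_Ico.2 (hblock k i hi)
  -- the block lists
  set l : ℕ → List ℕ := fun k =>
    (T (Nseq k)).sort (· ≤ ·) ++ ((Finset.Ico (Nseq k) (Nseq (k + 1))) \ T (Nseq k)).sort (· ≤ ·)
    with hl
  have hlen : ∀ k, (l k).length = Nseq (k + 1) - Nseq k := by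
    intro k
    simp only [hl, List.length_append, Finset.length_sort]
    rw [Finset.card_sdiff_of_subset (hTsub k), Nat.card_Ico]
    have := Finset.card_le_card (hTsub k)
    rw [Nat.card_Ico] at this
    omega
  have hcardle : ∀ k, (T (Nseq k)).card ≤ Nseq (k + 1) - Nseq k := by
    intro k
    have := Finset.card_le_card (hTsub k)
    rwa [Nat.card_Ico] at this
  have hmem : ∀ k v, v ∈ l k ↔ v ∈ Finset.Ico (Nseq k) (Nseq (k + 1)) := by
    intro k v
    simp only [hl, List.mem_append, Finset.mem_sort, Finset.mem_sdiff]
    constructor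
    · rintro (hv | hv)
      · exact hTsub k hv
      · exact hv.1
    · intro hv
      by_cases hvT : v ∈ T (Nseq k)
      · exact Or.inl hvT
      · exact Or.inr ⟨hv, hvT⟩
  have hnodup : ∀ k, (l k).Nodup := by
    intro k
    rw [hl]
    refine List.Nodup.append (Finset.sort_nodup _ _) (Finset.sort_nodup _ _) ?_
    intro v hv hv'
    rw [Finset.mem_sort] at hv hv'
    exact (Finset.mem_sdiff.1 hv').2 hv
  -- index function
  have hKex : ∀ n : ℕ, ∃ k, n < Nseq (k + 1) := fun n =>
    ⟨n, lt_of_lt_of_le (Nat.lt_succ_self n) (hk_le (n + 1))⟩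
  set K : ℕ → ℕ := fun n => Nat.find (hKex n) with hK
  have hKspec : ∀ n, n < Nseq (K n + 1) := fun n => Nat.find_spec (hKex n)
  have hKle : ∀ n, Nseq (K n) ≤ n := by
    intro n
    rcases Nat.eq_zero_or_pos (K n) with h0 | hpos
    · rw [h0, hN0]; exact Nat.zero_le n
    · have h1 : K n - 1 < K n := by omega
      have hmin : ¬ n < Nseq (K n - 1 + 1) := Nat.find_min (hKex n) h1
      have he : K n - 1 + 1 = K n := by omega
      rw [he] at hmin
      omega
  have hKuniq : ∀ k n, Nseq k ≤ n → n < Nseq (k + 1) → K n = k := by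
    intro k n h1 h2
    have hle : K n ≤ k := Nat.find_le h2
    rcases lt_or_eq_of_le hle with hlt' | heq
    · exfalso
      have hm : Nseq (K n + 1) ≤ Nseq k := hSM.monotone (show K n + 1 ≤ k by omega)
      have := hKspec n
      omega
    · exact heq
  -- the permutation as a function
  have hidx : ∀ n, n - Nseq (K n) < (l (K n)).length := by
    intro n
    rw [hlen]
    have := hKle n
    have := hKspec n
    omega
  set σf : ℕ → ℕ := fun n => (l (K n)).getD (n - Nseq (K n)) 0 with hσf
  have hgetD : ∀ n, σf n = (l (K n)).getD (n - Nseq (K n)) 0 := fun n => rfl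
  have hσval : ∀ n, σf n ∈ Finset.Ico (Nseq (K n)) (Nseq (K n + 1)) := by
    intro n
    rw [hgetD, List.getD_eq_getElem _ _ (hidx n)]
    exact (hmem _ _).1 (List.getElem_mem _)
  -- injectivity
  have hinj : Function.Injective σf := by
    intro n n' hnn
    by_cases hKeq : K n = K n'
    · have e1 : σf n = (l (K n')).getD (n - Nseq (K n')) 0 := by rw [hgetD, hKeq]
      rw [e1, hgetD n'] at hnn
      have h1 : n - Nseq (K n') < (l (K n')).length := by rw [← hKeq]; exact hidx n
      have h2 : n' - Nseq (K n') < (l (K n')).length := hidx n'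
      rw [List.getD_eq_getElem _ _ h1, List.getD_eq_getElem _ _ h2] at hnn
      have hidxeq : n - Nseq (K n') = n' - Nseq (K n') :=
        (List.Nodup.getElem_inj_iff (hnodup _)).1 hnn
      have ha := hKle n
      have hb := hKle n'
      have hc : Nseq (K n) = Nseq (K n') := by rw [hKeq]
      omega
    · exfalso
      have hv1 := Finset.mem_Ico.1 (hσval n)
      have hv2 := Finset.mem_Ico.1 (hσval n')
      rw [hnn] at hv1
      rcases Nat.lt_or_ge (K n) (K n') with hlt' | hge
      · have : Nseq (K n + 1) ≤ Nseq (K n') := hSM.monotone (show K n + 1 ≤ K n' by omega)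
        omega
      · have hlt'' : K n' < K n := by omega
        have : Nseq (K n' + 1) ≤ Nseq (K n) := hSM.monotone (show K n' + 1 ≤ K n by omega)
        omega
  -- surjectivity
  have hsurj : Function.Surjective σf := by
    intro v
    have hvmem : v ∈ Finset.Ico (Nseq (K v)) (Nseq (K v + 1)) :=
      Finset.mem_Ico.2 ⟨hKle v, hKspec v⟩
    have hvl : v ∈ l (K v) := (hmem (K v) v).2 hvmem
    obtain ⟨i, hi, hiv⟩ := List.mem_iff_getElem.1 hvl
    refine ⟨Nseq (K v) + i, ?_⟩
    have hilen : i < Nseq (K v + 1) - Nseq (K v) := by rw [← hlen]; exact hi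
    have hKn : K (Nseq (K v) + i) = K v :=
      hKuniq (K v) _ (Nat.le_add_right _ _) (by omega)
    have he : Nseq (K v) + i - Nseq (K v) = i := by omega
    rw [hgetD, hKn, he, List.getD_eq_getElem _ _ (by rw [hlen]; omega)]
    exact hiv
  set σ : Equiv.Perm ℕ := Equiv.ofBijective σf ⟨hinj, hsurj⟩ with hσ
  -- image of the initial segment of each block
  have himg2 : ∀ k, Finset.image σf (Finset.Ico (Nseq k) (Nseq k + (T (Nseq k)).card))
      = T (Nseq k) := by
    intro k
    have hsub : Finset.image σf (Finset.Ico (Nseq k) (Nseq k + (T (Nseq k)).card))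
        ⊆ T (Nseq k) := by
      intro v hv
      obtain ⟨n, hn, rfl⟩ := Finset.mem_image.1 hv
      obtain ⟨hn1, hn2⟩ := Finset.mem_Ico.1 hn
      have hcard := hcardle k
      have hKn : K n = k := hKuniq k n hn1 (by omega)
      have hidx' : n - Nseq k < ((T (Nseq k)).sort (· ≤ ·)).length := by
        rw [Finset.length_sort]; omega
      have heq : (l k).getD (n - Nseq k) 0 = ((T (Nseq k)).sort (· ≤ ·)).getD (n - Nseq k) 0 := by
        simp only [hl]
        exact List.getD_append _ _ _ _ hidx'
      rw [hgetD, hKn, heq, List.getD_eq_getElem _ _ hidx']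
      have := List.getElem_mem (l := (T (Nseq k)).sort (· ≤ ·)) hidx'
      rwa [Finset.mem_sort] at this
    refine Finset.eq_of_subset_of_card_le hsub ?_
    rw [Finset.card_image_of_injective _ hinj, Nat.card_Ico]
    omega
  -- derive the contradiction
  obtain ⟨L, hL⟩ := h σ
  set S : ℕ → H := fun N => ∑ n ∈ Finset.range N, x (σ n) with hS
  have key : ∀ k, ε ≤ ‖S (Nseq k + (T (Nseq k)).card) - S (Nseq k)‖ := by
    intro k
    have hsplit : S (Nseq k) + ∑ n ∈ Finset.Ico (Nseq k) (Nseq k + (T (Nseq k)).card), x (σ n)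
        = S (Nseq k + (T (Nseq k)).card) := by
      simp only [hS, Finset.range_eq_Ico]
      exact Finset.sum_Ico_consecutive _ (Nat.zero_le _) (Nat.le_add_right _ _)
    have hsum : ∑ n ∈ Finset.Ico (Nseq k) (Nseq k + (T (Nseq k)).card), x (σ n)
        = ∑ v ∈ T (Nseq k), x v := by
      have hsi := Finset.sum_image (f := x) (g := σf)
        (s := Finset.Ico (Nseq k) (Nseq k + (T (Nseq k)).card))
        (fun a _ b _ hab => hinj hab)
      rw [himg2 k] at hsi
      exact hsi.symm
    have hdiffeq : S (Nseq k + (T (Nseq k)).card) - S (Nseq k) = ∑ v ∈ T (Nseq k), x v := by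
      rw [← hsplit, hsum]; abel
    rw [hdiffeq]
    exact hT2 _
  obtain ⟨N, hN⟩ := Metric.cauchySeq_iff.1 hL.cauchySeq ε hε
  have h1 := hN (Nseq N + (T (Nseq N)).card)
    (le_trans (hk_le N) (Nat.le_add_right _ _)) (Nseq N) (hk_le N)
  rw [dist_eq_norm] at h1
  exact absurd (key N) (by linarith)

set_option maxHeartbeats 1000000 in
theorem stmt12 (φ ψ : ℕ → H) (m : ℕ → ℂ) (hB : Bessel φ)
    (hnbb : ∃ a : ℝ, 0 < a ∧ ∀ n, a ≤ ‖φ n‖) :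
    (∀ f : H, UncondConv (fun n => (m n * ⟪f, ψ n⟫) • φ n)) ↔
      Bessel (fun n => m n • ψ n) := by
  obtain ⟨a, ha, hA⟩ := hnbb
  obtain ⟨B₁, hB₁⟩ := hB
  have hB₁' : ∀ h : H, ∀ F : Finset ℕ, ∑ n ∈ F, ‖(inner ℂ h (φ n) : ℂ)‖ ^ 2
      ≤ max B₁ 0 * ‖h‖ ^ 2 := fun h F =>
    (hB₁ h F).trans (mul_le_mul_of_nonneg_right (le_max_left _ _) (sq_nonneg _))
  have hB0 : (0:ℝ) ≤ max B₁ 0 := le_max_right _ _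
  constructor
  · -- forward direction
    intro huc
    have hpt : ∀ h : H, ∃ C : ℝ, ∀ G : Finset ℕ,
        ∑ n ∈ G, ‖(inner ℂ h (m n • ψ n) : ℂ)‖ ^ 2 ≤ C := by
      intro h
      have hsummable := aux_summable_of_uncond _ (huc h)
      obtain ⟨C, hC0, hCb⟩ := aux_bdd_of_summable _ hsummable
      refine ⟨(2 * C) ^ 2 / a ^ 2, fun G => ?_⟩
      obtain ⟨P, hPG, hP⟩ := aux_signs (fun n => (m n * ⟪h, ψ n⟫) • φ n) G
      have hbound : ‖(∑ n ∈ P, (m n * ⟪h, ψ n⟫) • φ n)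
          - ∑ n ∈ G \ P, (m n * ⟪h, ψ n⟫) • φ n‖ ≤ 2 * C := by
        calc ‖(∑ n ∈ P, (m n * ⟪h, ψ n⟫) • φ n) - ∑ n ∈ G \ P, (m n * ⟪h, ψ n⟫) • φ n‖
            ≤ ‖∑ n ∈ P, (m n * ⟪h, ψ n⟫) • φ n‖
              + ‖∑ n ∈ G \ P, (m n * ⟪h, ψ n⟫) • φ n‖ := norm_sub_le _ _
          _ ≤ C + C := add_le_add (hCb P) (hCb (G \ P))
          _ = 2 * C := by ring
      have h1 : ∑ n ∈ G, ‖(m n * ⟪h, ψ n⟫) • φ n‖ ^ 2 ≤ (2 * C) ^ 2 :=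
        hP.trans (pow_le_pow_left₀ (norm_nonneg _) hbound 2)
      have h2 : ∀ n, a ^ 2 * ‖(inner ℂ h (m n • ψ n) : ℂ)‖ ^ 2
          ≤ ‖(m n * ⟪h, ψ n⟫) • φ n‖ ^ 2 := by
        intro n
        have hi : (inner ℂ h (m n • ψ n) : ℂ) = m n * ⟪h, ψ n⟫ := inner_smul_right _ _ _
        rw [hi, norm_smul, mul_pow]
        have hφ2 : a ^ 2 ≤ ‖φ n‖ ^ 2 := pow_le_pow_left₀ ha.le (hA n) 2
        calc a ^ 2 * ‖m n * ⟪h, ψ n⟫‖ ^ 2 = ‖m n * ⟪h, ψ n⟫‖ ^ 2 * a ^ 2 := by ring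
          _ ≤ ‖m n * ⟪h, ψ n⟫‖ ^ 2 * ‖φ n‖ ^ 2 :=
            mul_le_mul_of_nonneg_left hφ2 (sq_nonneg _)
      have h3 : a ^ 2 * ∑ n ∈ G, ‖(inner ℂ h (m n • ψ n) : ℂ)‖ ^ 2 ≤ (2 * C) ^ 2 := by
        rw [Finset.mul_sum]
        exact (Finset.sum_le_sum fun n _ => h2 n).trans h1
      rw [le_div_iff₀ (by positivity : (0:ℝ) < a ^ 2)]
      linarith
    -- Banach–Steinhaus
    set g : {p : Finset ℕ × (ℕ → ℂ) // ∑ n ∈ p.1, ‖p.2 n‖ ^ 2 ≤ 1} → H →L[ℂ] ℂ :=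
      fun p => ∑ n ∈ p.1.1, (p.1.2 n) • innerSL ℂ (m n • ψ n) with hg
    have happ : ∀ p (h : H), g p h = ∑ n ∈ p.1.1, p.1.2 n * ⟪m n • ψ n, h⟫ := by
      intro p h
      simp only [hg, ContinuousLinearMap.coe_sum', Finset.sum_apply,
        ContinuousLinearMap.coe_smul', Pi.smul_apply, innerSL_apply_apply, smul_eq_mul]
    have hptwise : ∀ h : H, ∃ C, ∀ p, ‖g p h‖ ≤ C := by
      intro h
      obtain ⟨C, hC⟩ := hpt h
      have hC0 : 0 ≤ C := le_trans (Finset.sum_nonneg fun n _ => sq_nonneg _) (hC ∅)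
      refine ⟨Real.sqrt C, fun p => ?_⟩
      rw [happ]
      calc ‖∑ n ∈ p.1.1, p.1.2 n * ⟪m n • ψ n, h⟫‖
          ≤ ∑ n ∈ p.1.1, ‖p.1.2 n * (⟪m n • ψ n, h⟫ : ℂ)‖ := norm_sum_le _ _
        _ = ∑ n ∈ p.1.1, ‖p.1.2 n‖ * ‖(⟪m n • ψ n, h⟫ : ℂ)‖ :=
            Finset.sum_congr rfl fun n _ => norm_mul _ _
        _ ≤ Real.sqrt (∑ n ∈ p.1.1, ‖p.1.2 n‖ ^ 2) *
            Real.sqrt (∑ n ∈ p.1.1, ‖(⟪m n • ψ n, h⟫ : ℂ)‖ ^ 2) :=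
            aux_cs_sqrt _ _ _ (fun n => norm_nonneg _) (fun n => norm_nonneg _)
        _ ≤ 1 * Real.sqrt C := by
            apply mul_le_mul
            · exact Real.sqrt_le_one.mpr p.2
            · apply Real.sqrt_le_sqrt
              calc ∑ n ∈ p.1.1, ‖(⟪m n • ψ n, h⟫ : ℂ)‖ ^ 2
                  = ∑ n ∈ p.1.1, ‖(⟪h, m n • ψ n⟫ : ℂ)‖ ^ 2 :=
                    Finset.sum_congr rfl fun n _ => by rw [norm_inner_symm]
                _ ≤ C := hC _
            · exact Real.sqrt_nonneg _
            · exact zero_le_one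
        _ = Real.sqrt C := one_mul _
    obtain ⟨C', hC'⟩ := banach_steinhaus hptwise
    have hC'0 : 0 ≤ C' := le_trans (norm_nonneg _) (hC' ⟨(∅, 0), by simp⟩)
    refine ⟨C' ^ 2, fun h F => ?_⟩
    have hsum_nonneg : (0:ℝ) ≤ ∑ n ∈ F, ‖(inner ℂ h (m n • ψ n) : ℂ)‖ ^ 2 :=
      Finset.sum_nonneg fun n _ => sq_nonneg _
    obtain ⟨S, hSnn, hS2⟩ : ∃ S : ℝ, 0 ≤ S ∧
        S ^ 2 = ∑ n ∈ F, ‖(inner ℂ h (m n • ψ n) : ℂ)‖ ^ 2 :=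
      ⟨Real.sqrt _, Real.sqrt_nonneg _, Real.sq_sqrt hsum_nonneg⟩
    by_cases hS0 : S = 0
    · rw [← hS2, hS0]
      have : (0:ℝ) ≤ C' ^ 2 * ‖h‖ ^ 2 := by positivity
      simpa using this
    · have hSpos : 0 < S := lt_of_le_of_ne hSnn (Ne.symm hS0)
      have hw2 : ∑ n ∈ F, ‖(⟪m n • ψ n, h⟫ : ℂ)‖ ^ 2 = S ^ 2 := by
        rw [hS2]
        exact Finset.sum_congr rfl fun n _ => by rw [norm_inner_symm]
      set u : ℕ → ℂ := fun n =>
        if n ∈ F then (starRingEnd ℂ) (⟪m n • ψ n, h⟫ : ℂ) / (S : ℂ) else 0 with hu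
      have hunorm : ∑ n ∈ F, ‖u n‖ ^ 2 ≤ 1 := by
        have hterm : ∀ n ∈ F, ‖u n‖ ^ 2 = ‖(⟪m n • ψ n, h⟫ : ℂ)‖ ^ 2 / S ^ 2 := by
          intro n hn
          simp only [hu, if_pos hn]
          rw [norm_div, RCLike.norm_conj, div_pow, Complex.norm_real,
            Real.norm_of_nonneg hSpos.le]
        rw [Finset.sum_congr rfl hterm, ← Finset.sum_div, hw2,
          div_self (by positivity : (S:ℝ) ^ 2 ≠ 0)]
      have happ2 : g ⟨(F, u), hunorm⟩ h = (S : ℂ) := by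
        rw [happ]
        have hterm : ∀ n ∈ F, u n * ⟪m n • ψ n, h⟫
            = ((‖(⟪m n • ψ n, h⟫ : ℂ)‖ ^ 2 : ℝ) : ℂ) / (S : ℂ) := by
          intro n hn
          simp only [hu, if_pos hn]
          rw [div_mul_eq_mul_div, mul_comm, Complex.mul_conj]
          norm_cast
          rw [Complex.normSq_eq_norm_sq]
        rw [Finset.sum_congr rfl hterm, ← Finset.sum_div]
        have hc : ∑ n ∈ F, ((‖(⟪m n • ψ n, h⟫ : ℂ)‖ ^ 2 : ℝ) : ℂ) = ((S ^ 2 : ℝ) : ℂ) := by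
          rw [← Complex.ofReal_sum, hw2]
        rw [hc]
        push_cast
        rw [sq, mul_div_assoc, div_self (by exact_mod_cast hS0), mul_one]
      have hfin : S ≤ C' * ‖h‖ := by
        have h1 : ‖g ⟨(F, u), hunorm⟩ h‖ ≤ ‖g ⟨(F, u), hunorm⟩‖ * ‖h‖ :=
          ContinuousLinearMap.le_opNorm _ _
        rw [happ2, Complex.norm_real, Real.norm_of_nonneg hSpos.le] at h1
        exact h1.trans (mul_le_mul_of_nonneg_right (hC' _) (norm_nonneg _))
      calc ∑ n ∈ F, ‖(inner ℂ h (m n • ψ n) : ℂ)‖ ^ 2 = S ^ 2 := hS2.symm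
        _ ≤ (C' * ‖h‖) ^ 2 := pow_le_pow_left₀ hSpos.le hfin 2
        _ = C' ^ 2 * ‖h‖ ^ 2 := by ring
  · -- backward direction
    intro hb f σ
    obtain ⟨B₂, hB₂⟩ := hb
    set c : ℕ → ℂ := fun n => m n * ⟪f, ψ n⟫ with hc
    have hcnorm : ∀ n, ‖c n‖ = ‖(inner ℂ f (m n • ψ n) : ℂ)‖ := by
      intro n
      rw [hc]
      simp only
      rw [inner_smul_right]
    have hcsum : ∀ F : Finset ℕ, ∑ n ∈ F, ‖c n‖ ^ 2 ≤ B₂ * ‖f‖ ^ 2 := by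
      intro F
      calc ∑ n ∈ F, ‖c n‖ ^ 2 = ∑ n ∈ F, ‖(inner ℂ f (m n • ψ n) : ℂ)‖ ^ 2 :=
            Finset.sum_congr rfl fun n _ => by rw [hcnorm]
        _ ≤ B₂ * ‖f‖ ^ 2 := hB₂ f F
    have hsq_summable : Summable (fun n => ‖c n‖ ^ 2) :=
      summable_of_sum_le (fun n => sq_nonneg _) hcsum
    have hsummable : Summable (fun n => c n • φ n) := by
      rw [summable_iff_vanishing]
      intro e he
      obtain ⟨ε, hε, hball⟩ := Metric.mem_nhds_iff.1 he
      obtain ⟨s, hs⟩ := hsq_summable.vanishing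
        (Metric.ball_mem_nhds (0 : ℝ) (show (0:ℝ) < ε ^ 2 / (max B₁ 0 + 1) by positivity))
      refine ⟨s, fun t ht => ?_⟩
      apply hball
      rw [Metric.mem_ball, dist_zero_right]
      have h1 : ‖∑ n ∈ t, c n • φ n‖ ^ 2 ≤ max B₁ 0 * ∑ n ∈ t, ‖c n‖ ^ 2 :=
        aux_synth hB0 hB₁' c t
      have h2 : ∑ n ∈ t, ‖c n‖ ^ 2 < ε ^ 2 / (max B₁ 0 + 1) := by
        have h2' := hs t ht
        rw [Metric.mem_ball, dist_zero_right] at h2'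
        calc ∑ n ∈ t, ‖c n‖ ^ 2 ≤ |∑ n ∈ t, ‖c n‖ ^ 2| := le_abs_self _
          _ < ε ^ 2 / (max B₁ 0 + 1) := by simpa using h2'
      have h3 : ‖∑ n ∈ t, c n • φ n‖ ^ 2 < ε ^ 2 := by
        calc ‖∑ n ∈ t, c n • φ n‖ ^ 2 ≤ max B₁ 0 * ∑ n ∈ t, ‖c n‖ ^ 2 := h1
          _ ≤ (max B₁ 0 + 1) * ∑ n ∈ t, ‖c n‖ ^ 2 :=
              mul_le_mul_of_nonneg_right (by linarith)
                (Finset.sum_nonneg fun n _ => sq_nonneg _)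
          _ < (max B₁ 0 + 1) * (ε ^ 2 / (max B₁ 0 + 1)) :=
              mul_lt_mul_of_pos_left h2 (by linarith)
          _ = ε ^ 2 := by field_simp
      nlinarith [norm_nonneg (∑ n ∈ t, c n • φ n), hε]
    obtain ⟨L, hL⟩ := hsummable
    refine ⟨L, ?_⟩
    have hcomp : HasSum ((fun n => c n • φ n) ∘ σ) L := (Equiv.hasSum_iff σ).2 hL
    exact hcomp.tendsto_sum_nat
end

section
/- Let Φ be a Riesz basis for H. Then M_{m,Φ,Ψ} is well defined on all of H if and only if M_{m,Φ,Ψ} is unconditionally convergent on H, and both are equivalent to (mₙ ψₙ) being a Bessel sequence for H. -/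
open scoped BigOperators ComplexConjugate
open Filter Finset

variable {H : Type*} [NormedAddCommGroup H] [InnerProductSpace ℂ H] [CompleteSpace H]

local notation "⟪" x ", " y "⟫" => @inner ℂ _ _ x y

noncomputable def partialOp (φ ψ : ℕ → H) (m : ℕ → ℂ) (N : ℕ) : H →L[ℝ] H :=
  LinearMap.mkContinuous
    { toFun := fun f => ∑ n ∈ Finset.range N, (m n * ⟪f, ψ n⟫) • φ n
      map_add' := by
        intro x y
        simp [inner_add_left, mul_add, add_smul, Finset.sum_add_distrib]
      map_smul' := by
        intro r x
        simp only [RingHom.id_apply, Finset.smul_sum]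
        refine Finset.sum_congr rfl fun n _ => ?_
        rw [show ⟪r • x, ψ n⟫ = ⟪((r : ℂ)) • x, ψ n⟫ by norm_cast,
          inner_smul_left]
        rw [Complex.conj_ofReal, mul_left_comm, mul_smul, Complex.coe_smul] }
    (∑ n ∈ Finset.range N, ‖m n‖ * ‖ψ n‖ * ‖φ n‖)
    (by
      intro f
      simp only [LinearMap.coe_mk, AddHom.coe_mk]
      calc ‖∑ n ∈ Finset.range N, (m n * ⟪f, ψ n⟫) • φ n‖
          ≤ ∑ n ∈ Finset.range N, ‖(m n * ⟪f, ψ n⟫) • φ n‖ := norm_sum_le _ _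
        _ ≤ ∑ n ∈ Finset.range N, (‖m n‖ * ‖ψ n‖ * ‖φ n‖) * ‖f‖ := by
            refine Finset.sum_le_sum fun n _ => ?_
            rw [norm_smul, norm_mul]
            have := norm_inner_le_norm (𝕜 := ℂ) f (ψ n)
            calc ‖m n‖ * ‖⟪f, ψ n⟫‖ * ‖φ n‖
                ≤ ‖m n‖ * (‖f‖ * ‖ψ n‖) * ‖φ n‖ := by
                  gcongr
              _ = ‖m n‖ * ‖ψ n‖ * ‖φ n‖ * ‖f‖ := by ring
        _ = (∑ n ∈ Finset.range N, ‖m n‖ * ‖ψ n‖ * ‖φ n‖) * ‖f‖ := by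
            rw [Finset.sum_mul])

example (φ ψ : ℕ → H) (m : ℕ → ℂ) (N : ℕ) (f : H) :
    partialOp φ ψ m N f = ∑ n ∈ Finset.range N, (m n * ⟪f, ψ n⟫) • φ n := rfl

lemma hasSum_of_bessel (φ ψ : ℕ → H) (m : ℕ → ℂ) (hφ : RieszBasis φ)
    (hB : Bessel (fun n => m n • ψ n)) (f : H) :
    ∃ s, HasSum (fun n => (m n * ⟪f, ψ n⟫) • φ n) s := by
  obtain ⟨B, hB⟩ := hB
  obtain ⟨-, A, B', hA, hR⟩ := hφ
  have hsum : Summable (fun n => ‖m n * ⟪f, ψ n⟫‖ ^ 2) := by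
    refine summable_of_sum_le (c := B * ‖f‖ ^ 2) (fun n => sq_nonneg _) fun F => ?_
    have := hB f F
    simpa [inner_smul_right] using this
  obtain ⟨s, hs, -⟩ := hR _ hsum
  exact ⟨s, hs⟩

lemma bessel_of_conv (φ ψ : ℕ → H) (m : ℕ → ℂ) (hφ : RieszBasis φ)
    (hconv : ∀ f : H, ∃ L : H,
      Tendsto (fun N => ∑ n ∈ Finset.range N, (m n * ⟪f, ψ n⟫) • φ n) atTop (nhds L)) :
    Bessel (fun n => m n • ψ n) := by
  obtain ⟨-, A, B', hA, hR⟩ := hφ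
  have hpt : ∀ f : H, ∃ C, ∀ N, ‖partialOp φ ψ m N f‖ ≤ C := by
    intro f
    obtain ⟨L, hL⟩ := hconv f
    have h2 : Tendsto (fun N => ‖partialOp φ ψ m N f‖) atTop (nhds ‖L‖) := hL.norm
    obtain ⟨C, hC⟩ := h2.bddAbove_range
    exact ⟨C, fun N => hC ⟨N, rfl⟩⟩
  obtain ⟨C, hC⟩ := banach_steinhaus hpt
  have hC0 : 0 ≤ C := le_trans (norm_nonneg _) (hC 0)
  refine ⟨C ^ 2 / A, ?_⟩
  intro h F
  obtain ⟨N, hFN⟩ : ∃ N, F ⊆ Finset.range N := by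
    rcases F.bddAbove with ⟨N, hN⟩
    exact ⟨N + 1, fun n hn => Finset.mem_range.2 (Nat.lt_succ_of_le (hN hn))⟩
  set c : ℕ → ℂ := fun n => if n ∈ Finset.range N then m n * ⟪h, ψ n⟫ else 0 with hc_def
  have hc : Summable (fun n => ‖c n‖ ^ 2) := by
    apply summable_of_ne_finset_zero (s := Finset.range N)
    intro n hn
    simp only [hc_def]
    rw [if_neg hn]
    simp
  obtain ⟨s, hs, hlow, -⟩ := hR c hc
  have hs2 : HasSum (fun n => c n • φ n) (∑ n ∈ Finset.range N, c n • φ n) := by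
    apply hasSum_sum_of_ne_finset_zero
    intro n hn
    simp only [hc_def]
    rw [if_neg hn, zero_smul]
  have hseq : s = partialOp φ ψ m N h := by
    rw [hs.unique hs2]
    show _ = ∑ n ∈ Finset.range N, (m n * ⟪h, ψ n⟫) • φ n
    exact Finset.sum_congr rfl fun n hn => by simp only [hc_def]; rw [if_pos hn]
  have htsum : ∑' n, ‖c n‖ ^ 2 = ∑ n ∈ Finset.range N, ‖m n * ⟪h, ψ n⟫‖ ^ 2 := by
    rw [tsum_eq_sum (s := Finset.range N) (fun n hn => by simp only [hc_def]; rw [if_neg hn]; simp)]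
    exact Finset.sum_congr rfl fun n hn => by simp only [hc_def]; rw [if_pos hn]
  have hnorm : ‖s‖ ≤ C * ‖h‖ := by
    rw [hseq]
    exact le_trans ((partialOp φ ψ m N).le_opNorm h) (by gcongr; exact hC N)
  have hkey : A * ∑ n ∈ Finset.range N, ‖m n * ⟪h, ψ n⟫‖ ^ 2 ≤ (C * ‖h‖) ^ 2 := by
    rw [← htsum]
    exact le_trans hlow (by nlinarith [norm_nonneg s, norm_nonneg h])
  have hFsub : ∑ n ∈ F, ‖(inner ℂ h ((m n) • ψ n) : ℂ)‖ ^ 2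
      ≤ ∑ n ∈ Finset.range N, ‖m n * ⟪h, ψ n⟫‖ ^ 2 := by
    refine le_trans (le_of_eq (Finset.sum_congr rfl fun n _ => by rw [inner_smul_right]))
      (Finset.sum_le_sum_of_subset_of_nonneg hFN fun n _ _ => sq_nonneg _)
  calc ∑ n ∈ F, ‖(inner ℂ h ((m n) • ψ n) : ℂ)‖ ^ 2
      ≤ ∑ n ∈ Finset.range N, ‖m n * ⟪h, ψ n⟫‖ ^ 2 := hFsub
    _ ≤ (C * ‖h‖) ^ 2 / A := by
        rw [le_div_iff₀ hA, mul_comm]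
        exact hkey
    _ = C ^ 2 / A * ‖h‖ ^ 2 := by ring

theorem stmt13 (φ ψ : ℕ → H) (m : ℕ → ℂ) (hφ : RieszBasis φ) :
    ((∀ f : H, ∃ L : H,
        Tendsto (fun N => ∑ n ∈ Finset.range N, (m n * ⟪f, ψ n⟫) • φ n) atTop (nhds L)) ↔
      (∀ f : H, UncondConv (fun n => (m n * ⟪f, ψ n⟫) • φ n))) ∧
    ((∀ f : H, ∃ L : H,
        Tendsto (fun N => ∑ n ∈ Finset.range N, (m n * ⟪f, ψ n⟫) • φ n) atTop (nhds L)) ↔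
      Bessel (fun n => m n • ψ n)) := by
  have key := bessel_of_conv φ ψ m hφ
  have key2 : Bessel (fun n => m n • ψ n) →
      ∀ f : H, UncondConv (fun n => (m n * ⟪f, ψ n⟫) • φ n) := by
    intro hB f σ
    obtain ⟨s, hs⟩ := hasSum_of_bessel φ ψ m hφ hB f
    have h2 : HasSum ((fun n => (m n * ⟪f, ψ n⟫) • φ n) ∘ σ) s := σ.hasSum_iff.2 hs
    exact ⟨s, h2.tendsto_sum_nat⟩
  refine ⟨⟨fun h f => key2 (key h) f, fun h => ?_⟩, key, fun hB f => ?_⟩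
  · intro f
    obtain ⟨L, hL⟩ := h f (Equiv.refl ℕ)
    exact ⟨L, by simpa using hL⟩
  · obtain ⟨s, hs⟩ := hasSum_of_bessel φ ψ m hφ hB f
    exact ⟨s, hs.tendsto_sum_nat⟩
end

section
/- If Φ is a Riesz basis for H and Ψ is norm-bounded below, and M_{m,Φ,Ψ} is well defined on all of H, then m ∈ ℓ∞. -/
open scoped BigOperators ComplexConjugate
open Filter Finset

variable {H : Type*} [NormedAddCommGroup H] [InnerProductSpace ℂ H] [CompleteSpace H]

local notation "⟪" x ", " y "⟫" => @inner ℂ _ _ x y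

theorem stmt14 (φ ψ : ℕ → H) (m : ℕ → ℂ) (hφ : RieszBasis φ)
    (hψ : ∃ a : ℝ, 0 < a ∧ ∀ n, a ≤ ‖ψ n‖)
    (h : ∀ f : H, ∃ L : H,
      Tendsto (fun N => ∑ n ∈ Finset.range N, (m n * ⟪f, ψ n⟫) • φ n) atTop (nhds L)) :
    ∃ C : ℝ, ∀ n, ‖m n‖ ≤ C := by

  obtain ⟨a, ha, haψ⟩ := hψ
  obtain ⟨-, A, B, hA, hAB⟩ := hφ
  -- lower bound on ‖φ n‖
  have hφlb : ∀ n, Real.sqrt A ≤ ‖φ n‖ := by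
    intro n
    set c : ℕ → ℂ := fun k => if k = n then 1 else 0 with hc
    have hsum : Summable (fun k => ‖c k‖ ^ 2) := by
      apply summable_of_ne_finset_zero (s := {n})
      intro k hk
      simp only [Finset.mem_singleton] at hk
      simp [hc, hk]
    obtain ⟨s, hs, hlow, -⟩ := hAB c hsum
    have hs' : HasSum (fun k => c k • φ k) (φ n) := by
      have : (fun k => c k • φ k) = fun k => if k = n then φ n else 0 := by
        funext k; by_cases hk : k = n <;> simp [hc, hk]
      rw [this]
      exact hasSum_ite_eq n (φ n)
    have hsφ : s = φ n := hs.unique hs'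
    have htsum : ∑' k, ‖c k‖ ^ 2 = 1 := by
      have : (fun k => ‖c k‖ ^ 2) = fun k => if k = n then (1:ℝ) else 0 := by
        funext k; by_cases hk : k = n <;> simp [hc, hk]
      rw [this, tsum_ite_eq]
    rw [hsφ, htsum, mul_one] at hlow
    calc Real.sqrt A ≤ Real.sqrt (‖φ n‖ ^ 2) := Real.sqrt_le_sqrt hlow
      _ = ‖φ n‖ := by rw [Real.sqrt_sq (norm_nonneg _)]
  have hsA : 0 < Real.sqrt A := Real.sqrt_pos.mpr hA
  -- the family of functionals
  set T : ℕ → (H →L[ℂ] ℂ) := fun n => (starRingEnd ℂ (m n)) • innerSL ℂ (ψ n) with hT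
  have hTapp : ∀ n f, ‖T n f‖ = ‖m n * ⟪f, ψ n⟫‖ := by
    intro n f
    have : T n f = starRingEnd ℂ (m n * ⟪f, ψ n⟫) := by
      simp [hT, map_mul, inner_conj_symm]
    rw [this, RCLike.norm_conj]
  -- pointwise boundedness
  have hpt : ∀ f : H, ∃ C : ℝ, ∀ n, ‖T n f‖ ≤ C := by
    intro f
    obtain ⟨L, hL⟩ := h f
    have hterm : Tendsto (fun n => (m n * ⟪f, ψ n⟫) • φ n) atTop (nhds 0) := by
      have h1 : Tendsto (fun n => (∑ k ∈ Finset.range (n+1), (m k * ⟪f, ψ k⟫) • φ k)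
          - ∑ k ∈ Finset.range n, (m k * ⟪f, ψ k⟫) • φ k) atTop (nhds (L - L)) :=
        Tendsto.sub (hL.comp (tendsto_add_atTop_nat 1)) hL
      simpa [Finset.sum_range_succ] using h1
    have hnorm : Tendsto (fun n => ‖(m n * ⟪f, ψ n⟫) • φ n‖) atTop (nhds 0) := by
      simpa using hterm.norm
    obtain ⟨C0, hC0⟩ := hnorm.bddAbove_range
    refine ⟨C0 / Real.sqrt A, fun n => ?_⟩
    rw [hTapp]
    rw [le_div_iff₀ hsA]
    calc ‖m n * ⟪f, ψ n⟫‖ * Real.sqrt A ≤ ‖m n * ⟪f, ψ n⟫‖ * ‖φ n‖ :=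
          mul_le_mul_of_nonneg_left (hφlb n) (norm_nonneg _)
      _ = ‖(m n * ⟪f, ψ n⟫) • φ n‖ := (norm_smul _ _).symm
      _ ≤ C0 := hC0 ⟨n, rfl⟩
  obtain ⟨C', hC'⟩ := banach_steinhaus hpt
  refine ⟨C' / a, fun n => ?_⟩
  have hTn : ‖T n‖ = ‖m n‖ * ‖ψ n‖ := by
    have := norm_smul (starRingEnd ℂ (m n)) (innerSL ℂ (ψ n))
    rw [hT]
    simp only [this, RCLike.norm_conj, innerSL_apply_norm]
  have h1 : ‖m n‖ * a ≤ C' := by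
    calc ‖m n‖ * a ≤ ‖m n‖ * ‖ψ n‖ := mul_le_mul_of_nonneg_left (haψ n) (norm_nonneg _)
      _ = ‖T n‖ := hTn.symm
      _ ≤ C' := hC' n
  rw [le_div_iff₀ ha]
  exact h1
end

section
/- If Φ and Ψ are Riesz bases for H, then M_{m,Φ,Ψ} is well defined on all of H if and only if m ∈ ℓ∞. -/
open scoped BigOperators ComplexConjugate
open Filter Finset

variable {H : Type*} [NormedAddCommGroup H] [InnerProductSpace ℂ H] [CompleteSpace H]

local notation "⟪" x ", " y "⟫" => @inner ℂ _ _ x y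

lemma riesz_norm_sq_bounds (ξ : ℕ → H) (A B : ℝ)
    (h : ∀ c : ℕ → ℂ, Summable (fun n => ‖c n‖ ^ 2) →
      ∃ s : H, HasSum (fun n => c n • ξ n) s ∧
        A * ∑' n, ‖c n‖ ^ 2 ≤ ‖s‖ ^ 2 ∧ ‖s‖ ^ 2 ≤ B * ∑' n, ‖c n‖ ^ 2) (n : ℕ) :
    A ≤ ‖ξ n‖ ^ 2 ∧ ‖ξ n‖ ^ 2 ≤ B := by
  classical
  set c : ℕ → ℂ := fun k => if k = n then 1 else 0 with hc
  have hsupp : ∀ k ∉ ({n} : Finset ℕ), ‖c k‖ ^ 2 = 0 := by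
    intro k hk
    simp only [Finset.mem_singleton] at hk
    simp [hc, hk]
  have hsum : Summable (fun k => ‖c k‖ ^ 2) := summable_of_ne_finset_zero hsupp
  have htsum : ∑' k, ‖c k‖ ^ 2 = 1 := by
    rw [tsum_eq_sum hsupp]; simp [hc]
  obtain ⟨s, hs, h1, h2⟩ := h c hsum
  have hsval : HasSum (fun k => c k • ξ k) (ξ n) := by
    have heq : (fun k => c k • ξ k) = (fun k => if k = n then ξ n else 0) := by
      funext k; by_cases hk : k = n <;> simp [hc, hk]
    rw [heq]; exact hasSum_ite_eq n (ξ n)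
  have hse : s = ξ n := hs.unique hsval
  rw [hse, htsum] at h1 h2
  constructor <;> linarith

lemma riesz_bessel (ξ : ℕ → H) (B : ℝ) (hB : 0 ≤ B)
    (h : ∀ c : ℕ → ℂ, Summable (fun n => ‖c n‖ ^ 2) →
      ∃ s : H, HasSum (fun n => c n • ξ n) s ∧ ‖s‖ ^ 2 ≤ B * ∑' n, ‖c n‖ ^ 2)
    (f : H) (F : Finset ℕ) :
    ∑ n ∈ F, ‖(⟪f, ξ n⟫ : ℂ)‖ ^ 2 ≤ B * ‖f‖ ^ 2 := by
  classical
  set S : ℝ := ∑ n ∈ F, ‖(⟪f, ξ n⟫ : ℂ)‖ ^ 2 with hS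
  have hS0 : 0 ≤ S := Finset.sum_nonneg fun _ _ => by positivity
  set c : ℕ → ℂ := fun k => if k ∈ F then conj (⟪f, ξ k⟫ : ℂ) else 0 with hc
  have hsupp : ∀ k ∉ F, (fun k => ‖c k‖ ^ 2) k = 0 := by intro k hk; simp [hc, hk]
  have hsupp' : ∀ k ∉ F, (fun k => c k • ξ k) k = 0 := by intro k hk; simp [hc, hk]
  have hsum : Summable (fun k => ‖c k‖ ^ 2) := summable_of_ne_finset_zero hsupp
  have htsum : ∑' k, ‖c k‖ ^ 2 = S := by
    rw [tsum_eq_sum hsupp, hS]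
    refine Finset.sum_congr rfl fun k hk => ?_
    simp [hc, hk, norm_inner_symm]
  obtain ⟨s, hs, h2⟩ := h c hsum
  rw [htsum] at h2
  have hse : s = ∑ k ∈ F, c k • ξ k := hs.unique (hasSum_sum_of_ne_finset_zero hsupp')
  have hinner : (⟪f, s⟫ : ℂ) = (S : ℂ) := by
    rw [hse, inner_sum]
    rw [hS]
    push_cast
    refine Finset.sum_congr rfl fun k hk => ?_
    rw [inner_smul_right]
    simp only [hc, if_pos hk]
    rw [RCLike.conj_mul]
    norm_cast
  have hSle : S ≤ ‖f‖ * ‖s‖ := by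
    have := norm_inner_le_norm (𝕜 := ℂ) f s
    rw [hinner] at this
    rwa [Complex.norm_real, Real.norm_eq_abs, abs_of_nonneg hS0] at this
  have hsq : S * S ≤ (B * ‖f‖ ^ 2) * S := by
    have h3 : S ^ 2 ≤ ‖f‖ ^ 2 * ‖s‖ ^ 2 := by
      have := mul_self_le_mul_self hS0 hSle
      nlinarith [norm_nonneg f, norm_nonneg s]
    nlinarith [norm_nonneg f, sq_nonneg (‖f‖)]
  rcases eq_or_lt_of_le hS0 with h0 | h0
  · rw [← h0]; positivity
  · exact le_of_mul_le_mul_right (by linarith [hsq]) h0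

theorem stmt15 (φ ψ : ℕ → H) (m : ℕ → ℂ) (hφ : RieszBasis φ) (hψ : RieszBasis ψ) :
    (∀ f : H, ∃ L : H,
      Tendsto (fun N => ∑ n ∈ Finset.range N, (m n * ⟪f, ψ n⟫) • φ n) atTop (nhds L)) ↔
    ∃ C : ℝ, ∀ n, ‖m n‖ ≤ C := by
  classical
  obtain ⟨-, Aφ, Bφ, hAφ, hφ'⟩ := hφ
  obtain ⟨-, Aψ, Bψ, hAψ, hψ'⟩ := hψ
  have hφn : ∀ n, Aφ ≤ ‖φ n‖ ^ 2 ∧ ‖φ n‖ ^ 2 ≤ Bφ := riesz_norm_sq_bounds φ Aφ Bφ hφ'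
  have hψn : ∀ n, Aψ ≤ ‖ψ n‖ ^ 2 ∧ ‖ψ n‖ ^ 2 ≤ Bψ := riesz_norm_sq_bounds ψ Aψ Bψ hψ'
  constructor
  · intro h
    -- the rank-one operators, as real-linear continuous maps
    set T : ℕ → H →L[ℝ] H := fun n =>
      ContinuousLinearMap.smulRight
        (m n • (Complex.conjCLE.toContinuousLinearMap.comp
          ((innerSL ℂ (ψ n)).restrictScalars ℝ))) (φ n) with hT
    have hTapp : ∀ n f, T n f = (m n * ⟪f, ψ n⟫) • φ n := by
      intro n f
      simp only [hT, ContinuousLinearMap.smulRight_apply, ContinuousLinearMap.smul_apply,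
        ContinuousLinearMap.coe_comp', Function.comp_apply,
        ContinuousLinearMap.coe_restrictScalars', innerSL_apply_apply,
        ContinuousLinearEquiv.coe_coe, Complex.conjCLE_apply, inner_conj_symm, smul_smul]
      rw [smul_eq_mul]
    have hpt : ∀ f : H, ∃ C : ℝ, ∀ n, ‖T n f‖ ≤ C := by
      intro f
      obtain ⟨L, hL⟩ := h f
      have hterm : Tendsto (fun n => T n f) atTop (nhds 0) := by
        have h1 : Tendsto (fun N => ∑ n ∈ Finset.range (N + 1), (m n * ⟪f, ψ n⟫) • φ n
            - ∑ n ∈ Finset.range N, (m n * ⟪f, ψ n⟫) • φ n) atTop (nhds (L - L)) :=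
          Tendsto.sub (hL.comp (tendsto_add_atTop_nat 1)) hL
        rw [sub_self] at h1
        refine h1.congr fun N => ?_
        rw [Finset.sum_range_succ, hTapp]
        abel
      have hbdd : BddAbove (Set.range fun n => ‖T n f‖) := hterm.norm.bddAbove_range
      obtain ⟨C, hC⟩ := hbdd
      exact ⟨C, fun n => hC ⟨n, rfl⟩⟩
    obtain ⟨C', hC'⟩ := banach_steinhaus hpt
    have hC'0 : 0 ≤ C' := le_trans (norm_nonneg _) (hC' 0)
    have hAψ' : 0 < Real.sqrt Aψ := Real.sqrt_pos.mpr hAψ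
    have hAφ' : 0 < Real.sqrt Aφ := Real.sqrt_pos.mpr hAφ
    refine ⟨C' / (Real.sqrt Aψ * Real.sqrt Aφ), fun n => ?_⟩
    have haψ : Real.sqrt Aψ ≤ ‖ψ n‖ := by
      have := (hφn n).1
      have := (hψn n).1
      calc Real.sqrt Aψ ≤ Real.sqrt (‖ψ n‖ ^ 2) := Real.sqrt_le_sqrt (hψn n).1
        _ = ‖ψ n‖ := by rw [Real.sqrt_sq (norm_nonneg _)]
    have haφ : Real.sqrt Aφ ≤ ‖φ n‖ := by
      calc Real.sqrt Aφ ≤ Real.sqrt (‖φ n‖ ^ 2) := Real.sqrt_le_sqrt (hφn n).1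
        _ = ‖φ n‖ := by rw [Real.sqrt_sq (norm_nonneg _)]
    have hval : ‖T n (ψ n)‖ = ‖m n‖ * ‖ψ n‖ ^ 2 * ‖φ n‖ := by
      rw [hTapp, norm_smul, norm_mul, inner_self_eq_norm_sq_to_K, norm_pow,
        RCLike.norm_ofReal, abs_of_nonneg (norm_nonneg _)]
    have hbound : ‖m n‖ * ‖ψ n‖ ^ 2 * ‖φ n‖ ≤ C' * ‖ψ n‖ := by
      rw [← hval]
      calc ‖T n (ψ n)‖ ≤ ‖T n‖ * ‖ψ n‖ := (T n).le_opNorm _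
        _ ≤ C' * ‖ψ n‖ := by
            exact mul_le_mul_of_nonneg_right (hC' n) (norm_nonneg _)
    rw [le_div_iff₀ (by positivity)]
    have hψpos : 0 < ‖ψ n‖ := lt_of_lt_of_le hAψ' haψ
    have hab : Real.sqrt Aψ * Real.sqrt Aφ ≤ ‖ψ n‖ * ‖φ n‖ :=
      mul_le_mul haψ haφ (le_of_lt hAφ') (norm_nonneg _)
    have h1 : ‖m n‖ * (Real.sqrt Aψ * Real.sqrt Aφ) * ‖ψ n‖ ≤ C' * ‖ψ n‖ := by
      calc ‖m n‖ * (Real.sqrt Aψ * Real.sqrt Aφ) * ‖ψ n‖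
          ≤ ‖m n‖ * (‖ψ n‖ * ‖φ n‖) * ‖ψ n‖ :=
            mul_le_mul_of_nonneg_right
              (mul_le_mul_of_nonneg_left hab (norm_nonneg _)) (norm_nonneg _)
        _ = ‖m n‖ * ‖ψ n‖ ^ 2 * ‖φ n‖ := by ring
        _ ≤ C' * ‖ψ n‖ := hbound
    exact le_of_mul_le_mul_right h1 hψpos
  · rintro ⟨C, hC⟩ f
    have hBψ0 : 0 ≤ Bψ := by nlinarith [(hψn 0).1, (hψn 0).2, sq_nonneg (‖ψ 0‖)]
    have hBessel : ∀ F : Finset ℕ, ∑ n ∈ F, ‖(⟪f, ψ n⟫ : ℂ)‖ ^ 2 ≤ Bψ * ‖f‖ ^ 2 :=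
      riesz_bessel ψ Bψ hBψ0
        (fun c hc => by obtain ⟨s, hs, -, h2⟩ := hψ' c hc; exact ⟨s, hs, h2⟩) f
    have hsummable : Summable (fun n => ‖(⟪f, ψ n⟫ : ℂ)‖ ^ 2) :=
      summable_of_sum_le (fun n => by positivity) hBessel
    have hsum2 : Summable (fun n => ‖m n * ⟪f, ψ n⟫‖ ^ 2) := by
      refine Summable.of_nonneg_of_le (fun n => by positivity) (fun n => ?_)
        (hsummable.mul_left (C ^ 2))
      rw [norm_mul, mul_pow]
      exact mul_le_mul_of_nonneg_right
        (pow_le_pow_left₀ (norm_nonneg _) (hC n) 2) (by positivity)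
    obtain ⟨s, hs, -, -⟩ := hφ' (fun n => m n * ⟪f, ψ n⟫) hsum2
    exact ⟨s, hs.tendsto_sum_nat⟩
end
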